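/- arXiv:2509.15013 — 3 statements merged into one kernel-verified Lean document; each statement's English description precedes it below -/
import Mathlib

section
/- Let m, n, h ≥ 1, let T ⊆ [m]×[n] be a spanning tree of the complete bipartite graph on [m] ⊔ [n], and let (i_1,j_1), …, (i_h,j_h) ∈ ([m]×[n]) \ T be any h edges not in T. Then the union of the fundamental cycles satisfies |C_{T,(i_1,j_1)} ∪ ⋯ ∪ C_{T,(i_h,j_h)}| ≤ 2(m+h−1). -/
open Finset

/-- A subset of `[m] × [n]`, viewed as the edge set of a bipartite graph with left
vertex set `Fin m` and right vertex set `Fin n`, is a *simple cycle* (of length `2k`,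
`k ≥ 2`) if it has the form
`{(i₁,j₁),(i₂,j₁),(i₂,j₂),(i₃,j₂),…,(i_k,j_k),(i₁,j_k)}`
for pairwise distinct `i₁,…,i_k` and pairwise distinct `j₁,…,j_k`. -/
def IsSimpleCycle {m n : ℕ} (C : Finset (Fin m × Fin n)) : Prop :=
  ∃ k : ℕ, 2 ≤ k ∧ ∃ (I : ℕ → Fin m) (J : ℕ → Fin n),
    Set.InjOn I (Set.Iio k) ∧ Set.InjOn J (Set.Iio k) ∧
    C = ((Finset.range k).image fun ℓ => (I ℓ, J ℓ)) ∪
        ((Finset.range k).image fun ℓ => (I ((ℓ + 1) % k), J ℓ))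

/-- An edge set is *acyclic* if it contains no simple cycle. -/
def IsAcyclicEdges {m n : ℕ} (E : Finset (Fin m × Fin n)) : Prop :=
  ∀ C ⊆ E, ¬ IsSimpleCycle C

/-- The parity-check matrix of an `(m, n, a = 1, b = 1, h)` grid code over `F` with
global parity-check vectors `c`.  Rows are indexed by `Fin m ⊕ (Fin (n-1) ⊕ Fin h)`
(the `m` row checks, the first `n - 1` column checks, and the `h` global checks) and
columns by `Fin m × Fin n`. -/
def gridH (F : Type*) [Field F] (m n h : ℕ) (c : Fin m × Fin n → Fin h → F) :
    Matrix (Fin m ⊕ (Fin (n - 1) ⊕ Fin h)) (Fin m × Fin n) F :=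
  Matrix.of fun r ij =>
    Sum.elim (fun i => if ij.1 = i then (1 : F) else 0)
      (Sum.elim (fun j : Fin (n - 1) => if (ij.2 : ℕ) = (j : ℕ) then (1 : F) else 0)
        (fun k => c ij k)) r

/-- The grid code with global parity checks `c` is *maximally recoverable* (MR) if the
columns of its parity-check matrix indexed by `E` are linearly independent for every
pattern `E` which is the union of an acyclic edge set and at most `h` further edges. -/
def IsMR (F : Type*) [Field F] (m n h : ℕ) (c : Fin m × Fin n → Fin h → F) : Prop :=
  ∀ E : Finset (Fin m × Fin n),
    (∃ E' F' : Finset (Fin m × Fin n),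
        IsAcyclicEdges E' ∧ F'.card ≤ h ∧ E = E' ∪ F') →
    ((gridH F m n h c).submatrix id (fun e : E => (e : Fin m × Fin n))).rank = E.card

/-- A *spanning tree* of the complete bipartite graph on `[m] ⊔ [n]`: an acyclic edge
set with `m + n - 1` edges. -/
def IsSpanningTree {m n : ℕ} (T : Finset (Fin m × Fin n)) : Prop :=
  IsAcyclicEdges T ∧ T.card = m + n - 1

/-- `IsCycleSumOf c C s` says `C` is a simple cycle
`{(i₁,j₁),(i₂,j₁),…,(i_k,j_k),(i₁,j_k)}` and
`s = Σ_{ℓ=1}^{k} (c^{i_ℓ,j_ℓ} − c^{i_{ℓ+1},j_ℓ})` (with `i_{k+1} := i₁`) is the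
corresponding cycle sum `Σ_H(C) ∈ F^h`. -/
def IsCycleSumOf {F : Type*} [Field F] {m n h : ℕ} (c : Fin m × Fin n → Fin h → F)
    (C : Finset (Fin m × Fin n)) (s : Fin h → F) : Prop :=
  ∃ k : ℕ, 2 ≤ k ∧ ∃ (I : ℕ → Fin m) (J : ℕ → Fin n),
    Set.InjOn I (Set.Iio k) ∧ Set.InjOn J (Set.Iio k) ∧
    C = ((Finset.range k).image fun ℓ => (I ℓ, J ℓ)) ∪
        ((Finset.range k).image fun ℓ => (I ((ℓ + 1) % k), J ℓ)) ∧
    s = ∑ ℓ ∈ Finset.range k, (c (I ℓ, J ℓ) - c (I ((ℓ + 1) % k), J ℓ))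

/-- `IsGammaCycleSumOf γ C g` says `C` is a simple cycle and
`g = γ(C) = Σ_{ℓ=1}^{k} (γ(i_ℓ,j_ℓ) − γ(i_{ℓ+1},j_ℓ))`. -/
def IsGammaCycleSumOf {F : Type*} [Field F] {m n : ℕ} (γ : Fin m × Fin n → F)
    (C : Finset (Fin m × Fin n)) (g : F) : Prop :=
  ∃ k : ℕ, 2 ≤ k ∧ ∃ (I : ℕ → Fin m) (J : ℕ → Fin n),
    Set.InjOn I (Set.Iio k) ∧ Set.InjOn J (Set.Iio k) ∧
    C = ((Finset.range k).image fun ℓ => (I ℓ, J ℓ)) ∪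
        ((Finset.range k).image fun ℓ => (I ((ℓ + 1) % k), J ℓ)) ∧
    g = ∑ ℓ ∈ Finset.range k, (γ (I ℓ, J ℓ) - γ (I ((ℓ + 1) % k), J ℓ))


/-!
Every edge of a union `E` of cycles shares its right endpoint with another edge of `E`, so
`E` has at least twice as many edges as right vertices `R`. On the other hand at most `h` edges
of `E` lie outside the tree, and the rest form a nonempty forest, which has fewer edges than
vertices: `|E| - h ≤ |E ∩ T| < m + R ≤ m + |E| / 2`.
-/

section Counting

variable {α β : Type*}

lemma Finset.card_image_erase_lt [DecidableEq α] [DecidableEq β] {s : Finset α} {q : α}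
    (f : α → β) (hq : q ∈ s) (hfiber : ∀ r ∈ s, f r = f q → r = q) :
    #((s.erase q).image f) < #(s.image f) := by
  refine card_lt_card ((ssubset_iff_of_subset (image_subset_image (erase_subset q s))).2
    ⟨f q, mem_image_of_mem f hq, fun hmem => ?_⟩)
  obtain ⟨r, hr, hrq⟩ := mem_image.1 hmem
  exact ne_of_mem_erase hr (hfiber r (mem_of_mem_erase hr) hrq)

lemma Set.injOn_of_forall_lt_ne {γ : Type*} [LinearOrder γ] {f : γ → α} {s : Set γ}
    (h : ∀ a ∈ s, ∀ b ∈ s, a < b → f a ≠ f b) : Set.InjOn f s := by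
  intro a ha b hb hab
  by_contra hne
  rcases lt_or_gt_of_ne hne with hlt | hlt
  exacts [h a ha b hb hlt hab, h b hb a ha hlt hab.symm]

lemma Finset.card_biUnion_le_card_inter_add_card {ι : Type*} [DecidableEq α] {s : Finset ι}
    {C : ι → Finset α} {e : ι → α} {T : Finset α} (hC : ∀ i ∈ s, C i ⊆ insert (e i) T) :
    #(s.biUnion C) ≤ #(s.biUnion C ∩ T) + #s := calc
  #(s.biUnion C) ≤ #((s.biUnion C ∩ T) ∪ s.image e) := card_le_card fun q hq => by
    obtain ⟨i, hi, hqi⟩ := mem_biUnion.1 hq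
    rcases mem_insert.1 (hC i hi hqi) with rfl | hqT
    exacts [mem_union_right _ (mem_image_of_mem e hi), mem_union_left _ (mem_inter.2 ⟨hq, hqT⟩)]
  _ ≤ #(s.biUnion C ∩ T) + #s := (card_union_le _ _).trans (Nat.add_le_add_left card_image_le _)

lemma Nat.succ_mod_ne_self {ℓ k : ℕ} (hk : 2 ≤ k) (hℓ : ℓ < k) : (ℓ + 1) % k ≠ ℓ := by
  rcases Nat.lt_or_ge (ℓ + 1) k with hlt | hge
  · rw [Nat.mod_eq_of_lt hlt]; omega
  · rw [show ℓ + 1 = k by omega, Nat.mod_self]; omega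

end Counting

section Forests

variable {m n : ℕ}

lemma IsSimpleCycle.exists_snd_eq_ne {C : Finset (Fin m × Fin n)} (hC : IsSimpleCycle C)
    {q : Fin m × Fin n} (hq : q ∈ C) : ∃ r ∈ C, r.2 = q.2 ∧ r ≠ q := by
  obtain ⟨k, hk, I, J, hI, -, rfl⟩ := hC
  have hturn : ∀ ℓ < k, I ((ℓ + 1) % k) ≠ I ℓ := fun ℓ hℓ hIℓ =>
    Nat.succ_mod_ne_self hk hℓ (hI (Set.mem_Iio.2 (Nat.mod_lt _ (by omega))) hℓ hIℓ)
  simp only [mem_union, mem_image, mem_range] at hq ⊢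
  rcases hq with ⟨ℓ, hℓ, rfl⟩ | ⟨ℓ, hℓ, rfl⟩
  · exact ⟨_, Or.inr ⟨ℓ, hℓ, rfl⟩, rfl, fun h => hturn ℓ hℓ (congrArg Prod.fst h)⟩
  · exact ⟨_, Or.inl ⟨ℓ, hℓ, rfl⟩, rfl, fun h => hturn ℓ hℓ (congrArg Prod.fst h).symm⟩

lemma IsSimpleCycle.nontrivial {C : Finset (Fin m × Fin n)} (hC : IsSimpleCycle C) :
    C.Nontrivial := by
  obtain ⟨q, hq⟩ : C.Nonempty := by
    obtain ⟨k, hk, I, J, -, -, rfl⟩ := hC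
    exact ⟨(I 0, J 0), mem_union_left _ (mem_image_of_mem _ (mem_range.2 (by omega)))⟩
  obtain ⟨r, hr, -, hrq⟩ := hC.exists_snd_eq_ne hq
  exact ⟨r, hr, q, hq, hrq⟩

lemma IsSimpleCycle.inter_nonempty {C T : Finset (Fin m × Fin n)} {e : Fin m × Fin n}
    (hC : IsSimpleCycle C) (hCT : C ⊆ insert e T) : (C ∩ T).Nonempty := by
  obtain ⟨q, hq, hqe⟩ := hC.nontrivial.exists_ne e
  exact ⟨q, mem_inter.2 ⟨hq, (mem_insert.1 (hCT hq)).resolve_left hqe⟩⟩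

lemma two_mul_card_image_snd_le_card_biUnion {ι : Type*} {s : Finset ι}
    {C : ι → Finset (Fin m × Fin n)} (hC : ∀ i ∈ s, IsSimpleCycle (C i)) :
    2 * #((s.biUnion C).image Prod.snd) ≤ #(s.biUnion C) :=
  mul_card_image_le_card _ 2 fun j hj => by
    obtain ⟨q, hq, rfl⟩ := mem_image.1 hj
    obtain ⟨i, hi, hqi⟩ := mem_biUnion.1 hq
    obtain ⟨r, hr, hrq, hne⟩ := (hC i hi).exists_snd_eq_ne hqi
    exact one_lt_card.2 ⟨r, mem_filter.2 ⟨mem_biUnion.2 ⟨i, hi, hr⟩, hrq⟩, q,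
      mem_filter.2 ⟨hq, rfl⟩, hne⟩

lemma IsAcyclicEdges.mono {E F : Finset (Fin m × Fin n)} (hF : IsAcyclicEdges F)
    (hEF : E ⊆ F) : IsAcyclicEdges E :=
  fun C hCE => hF C (hCE.trans hEF)

def IsWalk (E : Finset (Fin m × Fin n)) (I : ℕ → Fin m) (J : ℕ → Fin n) : Prop :=
  ∀ ℓ, (I ℓ, J ℓ) ∈ E ∧ (I (ℓ + 1), J ℓ) ∈ E

namespace IsWalk

variable {E : Finset (Fin m × Fin n)} {I : ℕ → Fin m} {J : ℕ → Fin n}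

lemma exists_isSimpleCycle_of_injOn (hw : IsWalk E I J) {a b : ℕ} (hab : a + 2 ≤ b)
    (hI : Set.InjOn I (Set.Ico a b)) (hJ : Set.InjOn J (Set.Ico a b))
    (hclose : (I a, J (b - 1)) ∈ E) : ∃ C ⊆ E, IsSimpleCycle C := by
  obtain ⟨k, hk, rfl⟩ : ∃ k, 2 ≤ k ∧ b = a + k := ⟨b - a, by omega, by omega⟩
  have hshift : Set.MapsTo (a + ·) (Set.Iio k) (Set.Ico a (a + k)) := fun ℓ hℓ => by
    simp only [Set.mem_Iio, Set.mem_Ico] at hℓ ⊢; omega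
  refine ⟨_, ?_, k, hk, fun ℓ => I (a + ℓ), fun ℓ => J (a + ℓ),
    hI.comp (add_right_injective a).injOn hshift, hJ.comp (add_right_injective a).injOn hshift,
    rfl⟩
  refine union_subset (image_subset_iff.2 fun ℓ _ => (hw _).1) (image_subset_iff.2 fun ℓ hℓ => ?_)
  show (I (a + (ℓ + 1) % k), J (a + ℓ)) ∈ E
  rw [mem_range] at hℓ
  rcases Nat.lt_or_ge (ℓ + 1) k with hlt | hge
  · rw [Nat.mod_eq_of_lt hlt]
    exact (hw (a + ℓ)).2
  · rwa [show ℓ + 1 = k by omega, Nat.mod_self, show a + ℓ = a + k - 1 by omega]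

/-- A non-backtracking walk in a finite graph closes up a cycle at its first repeated vertex. -/
lemma exists_isSimpleCycle (hw : IsWalk E I J) (hIturn : ∀ ℓ, I (ℓ + 1) ≠ I ℓ)
    (hJturn : ∀ ℓ, J (ℓ + 1) ≠ J ℓ) : ∃ C ⊆ E, IsSimpleCycle C := by
  have hrep : ∃ t, ∃ a < t, I a = I t ∨ J a = J t := by
    obtain ⟨x, y, hxy, hIxy⟩ := Finite.exists_ne_map_eq_of_infinite I
    rcases lt_or_gt_of_ne hxy with h | h
    exacts [⟨y, x, h, Or.inl hIxy⟩, ⟨x, y, h, Or.inl hIxy.symm⟩]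
  classical
  set t := Nat.find hrep
  have hfirst : ∀ b < t, ∀ a < b, I a ≠ I b ∧ J a ≠ J b := fun b hb => by
    simpa only [not_exists, not_or, not_and] using Nat.find_min hrep hb
  obtain ⟨s, hst, hrep_t⟩ := Nat.find_spec hrep
  by_cases hIrep : ∃ a < t, I a = I t
  · obtain ⟨a, hat, hIa⟩ := hIrep
    have hturn : a + 2 ≤ t := by
      by_contra! h
      exact hIturn a (by rw [show a + 1 = t by omega]; exact hIa.symm)
    refine hw.exists_isSimpleCycle_of_injOn hturn
      (Set.injOn_of_forall_lt_ne fun x _ y hy hxy => (hfirst y hy.2 x hxy).1)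
      (Set.injOn_of_forall_lt_ne fun x _ y hy hxy => (hfirst y hy.2 x hxy).2) ?_
    simpa only [hIa, Nat.sub_add_cancel (by omega : 1 ≤ t)] using (hw (t - 1)).2
  · -- the cycle is `I (s+1), J (s+1), …, I t, J t = J s`, closed by the edge `(I (s+1), J s)`
    push Not at hIrep
    have hJs : J s = J t := hrep_t.resolve_left (hIrep s hst)
    have hturn : s + 3 ≤ t + 1 := by
      by_contra! h
      exact hJturn s (by rw [show s + 1 = t by omega]; exact hJs.symm)
    refine hw.exists_isSimpleCycle_of_injOn hturn
      (Set.injOn_of_forall_lt_ne fun x _ y hy hxy => ?_)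
      (Set.injOn_of_forall_lt_ne fun x hx y hy hxy => ?_) ?_
    · rcases (Nat.lt_succ_iff.1 hy.2).lt_or_eq with hyt | rfl
      exacts [(hfirst y hyt x hxy).1, hIrep x hxy]
    · rcases (Nat.lt_succ_iff.1 hy.2).lt_or_eq with hyt | rfl
      · exact (hfirst y hyt x hxy).2
      · rw [← hJs]
        exact fun h => (hfirst x hxy s hx.1).2 h.symm
    · simpa only [Nat.add_sub_cancel, ← hJs] using (hw s).2

end IsWalk

lemma exists_isWalk_of_forall_exists_ne {E : Finset (Fin m × Fin n)} (hE : E.Nonempty)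
    (hdeg : ∀ q ∈ E, (∃ r ∈ E, r.1 = q.1 ∧ r ≠ q) ∧ (∃ r ∈ E, r.2 = q.2 ∧ r ≠ q)) :
    ∃ I J, IsWalk E I J ∧ (∀ ℓ, I (ℓ + 1) ≠ I ℓ) ∧ ∀ ℓ, J (ℓ + 1) ≠ J ℓ := by
  have hstep : ∀ q : E, ∃ q' : E, (q'.1.1, q.1.2) ∈ E ∧ q'.1.1 ≠ q.1.1 ∧ q'.1.2 ≠ q.1.2 := by
    rintro ⟨q, hq⟩
    obtain ⟨r, hr, hr2, hrq⟩ := (hdeg q hq).2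
    obtain ⟨r', hr', hr'1, hr'r⟩ := (hdeg r hr).1
    have hr1 : r.1 ≠ q.1 := fun h => hrq (Prod.ext h hr2)
    refine ⟨⟨r', hr'⟩, by rwa [hr'1, ← hr2], hr'1 ▸ hr1, fun h => hr'r (Prod.ext hr'1 ?_)⟩
    rw [h, hr2]
  choose next hnext using hstep
  obtain ⟨q₀, hq₀⟩ := hE
  let p : ℕ → E := fun ℓ => next^[ℓ] ⟨q₀, hq₀⟩
  have hp : ∀ ℓ, p (ℓ + 1) = next (p ℓ) := fun ℓ => Function.iterate_succ_apply' next ℓ _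
  refine ⟨fun ℓ => (p ℓ).1.1, fun ℓ => (p ℓ).1.2, fun ℓ => ⟨(p ℓ).2, ?_⟩,
    fun ℓ => ?_, fun ℓ => ?_⟩ <;> simp only [hp]
  exacts [(hnext (p ℓ)).1, (hnext (p ℓ)).2.1, (hnext (p ℓ)).2.2]

namespace IsAcyclicEdges

variable {E : Finset (Fin m × Fin n)}

lemma exists_leaf (hE : IsAcyclicEdges E) (hne : E.Nonempty) :
    ∃ q ∈ E, (∀ r ∈ E, r.1 = q.1 → r = q) ∨ (∀ r ∈ E, r.2 = q.2 → r = q) := by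
  by_contra! hdeg
  obtain ⟨I, J, hw, hIturn, hJturn⟩ := exists_isWalk_of_forall_exists_ne hne fun q hq =>
    ⟨by simpa only [and_comm] using (hdeg q hq).1, by simpa only [and_comm] using (hdeg q hq).2⟩
  obtain ⟨C, hCE, hC⟩ := hw.exists_isSimpleCycle hIturn hJturn
  exact hE C hCE hC

lemma card_lt_card_image_fst_add_card_image_snd (hE : IsAcyclicEdges E) (hne : E.Nonempty) :
    #E < #(E.image Prod.fst) + #(E.image Prod.snd) := by
  induction E using Finset.strongInduction with | H E ih => ?_
  obtain ⟨q, hq, hleaf⟩ := hE.exists_leaf hne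
  rcases (E.erase q).eq_empty_or_nonempty with hq' | hq'
  · obtain rfl : E = {q} := ((erase_eq_empty_iff E q).1 hq').resolve_left hne.ne_empty
    simp
  have ih' := ih _ (erase_ssubset hq) (hE.mono (erase_subset q E)) hq'
  have hfst := card_le_card (image_subset_image (f := Prod.fst) (erase_subset q E))
  have hsnd := card_le_card (image_subset_image (f := Prod.snd) (erase_subset q E))
  have hleaf_lt := hleaf.imp (card_image_erase_lt Prod.fst hq) (card_image_erase_lt Prod.snd hq)
  rw [card_erase_of_mem hq] at ih'
  have := hne.card_pos
  omega

end IsAcyclicEdges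

end Forests

theorem statement3_general (m n h : ℕ)
    (T : Finset (Fin m × Fin n)) (hT : IsSpanningTree T)
    (e : Fin h → Fin m × Fin n)
    (C : Fin h → Finset (Fin m × Fin n))
    (hC : ∀ ℓ, IsSimpleCycle (C ℓ) ∧ C ℓ ⊆ insert (e ℓ) T ∧ e ℓ ∈ C ℓ) :
    (Finset.univ.biUnion C).card ≤ 2 * (m + h - 1) := by
  set E := univ.biUnion C
  rcases E.eq_empty_or_nonempty with hE | ⟨q, hq⟩
  · simp [hE]
  obtain ⟨ℓ, -, hqℓ⟩ := mem_biUnion.1 hq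
  have hET : (E ∩ T).Nonempty := ((hC ℓ).1.inter_nonempty (hC ℓ).2.1).mono
    (inter_subset_inter_right (subset_biUnion_of_mem C (mem_univ ℓ)))
  have hforest := (hT.1.mono inter_subset_right).card_lt_card_image_fst_add_card_image_snd hET
  have hfst : #((E ∩ T).image Prod.fst) ≤ m := by
    simpa using card_le_univ ((E ∩ T).image Prod.fst)
  have hsnd := card_le_card (image_subset_image (f := Prod.snd) (inter_subset_left : E ∩ T ⊆ E))
  have hcycles : 2 * #(E.image Prod.snd) ≤ #E :=
    two_mul_card_image_snd_le_card_biUnion fun ℓ _ => (hC ℓ).1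
  have hoff : #E ≤ #(E ∩ T) + #(univ : Finset (Fin h)) :=
    card_biUnion_le_card_inter_add_card fun ℓ _ => (hC ℓ).2.1
  rw [card_fin] at hoff
  omega

/-- Proposition 3.5.  For any spanning tree `T ⊆ [m]×[n]` and any `h`
edges `e 0, …, e (h-1) ∉ T`, the union of the fundamental cycles `C_{T, e ℓ}` has at most
`2(m + h - 1)` edges. -/
theorem statement3 (m n h : ℕ) (hm : 1 ≤ m) (hn : 1 ≤ n) (hh : 1 ≤ h)
    (T : Finset (Fin m × Fin n)) (hT : IsSpanningTree T)
    (e : Fin h → Fin m × Fin n) (he : ∀ ℓ, e ℓ ∉ T)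
    (C : Fin h → Finset (Fin m × Fin n))
    (hC : ∀ ℓ, IsSimpleCycle (C ℓ) ∧ C ℓ ⊆ insert (e ℓ) T ∧ e ℓ ∈ C ℓ) :
    (Finset.univ.biUnion C).card ≤ 2 * (m + h - 1) :=
  statement3_general m n h T hT e C hC
end

section
/- Let m ≥ 2 and let n ≥ 2 be a power of 2, and let q = n^{m−1} (a power of 2). Then there exists an MR (m, n, a=1, b=1, h=1) grid code over the field F_q; moreover it can be taken to be a Gabidulin construction, i.e., there is a map γ : [m]×[n] → F_q such that the grid code whose single global parity row has entries γ(i,j) in column (i,j) is MR. -/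
open Finset

/-!
For `h = 1`, a kernel vector `y` of the parity-check matrix supported on `E = E' ∪ {f}`, with
`E'` acyclic, has zero row and column sums. Its support therefore has all degrees at least two
and contains a simple cycle, which must use `f`. Subtracting the multiple of the signed indicator
of that cycle that agrees with `y` at `f` leaves a balanced vector supported on `E'`, hence zero.
So `y` is a multiple of the cycle vector, and the global check forces the cycle sum `γ(C)` to
vanish: the code is MR as soon as no cycle sum vanishes.

Take `γ(i,j) = β_j α_i`, where `K ⊆ F` is the subfield with `n` elements, `β : [n] ≃ K`, and
`α_1, …, α_m` are affinely independent points of the `(m-1)`-dimensional `K`-space `F`. Grouping a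
cycle sum by left vertices writes it as `∑ w_i α_i` with `∑ w_i = 0` and `w_i = β_j - β_j'` for
the two edges `(i,j), (i,j')` of the cycle at a vertex `i`, so it does not vanish.
-/

open Function Matrix

theorem Finset.sum_range_comp_add_one_mod {M : Type*} [AddCommMonoid M] (f : ℕ → M) {k : ℕ}
    (hk : 0 < k) : ∑ ℓ ∈ range k, f ((ℓ + 1) % k) = ∑ ℓ ∈ range k, f ℓ := by
  obtain ⟨k, rfl⟩ := Nat.exists_eq_add_one_of_ne_zero hk.ne'
  rw [sum_range_succ, sum_range_succ', Nat.mod_self]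
  congr 1
  exact sum_congr rfl fun ℓ hℓ => by rw [Nat.mod_eq_of_lt (by simpa using hℓ)]

theorem Finset.sum_range_ite_apply_eq {ι M : Type*} [DecidableEq ι] [AddCommMonoid M] {k : ℕ}
    {I : ℕ → ι} (hI : Set.InjOn I (Set.Iio k)) {ℓ₀ : ℕ} (hℓ₀ : ℓ₀ < k) (g : ℕ → M) :
    ∑ ℓ ∈ range k, (if I ℓ = I ℓ₀ then g ℓ else 0) = g ℓ₀ := by
  rw [sum_eq_single_of_mem ℓ₀ (mem_range.2 hℓ₀) fun ℓ hℓ hne => if_neg fun h =>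
    hne (hI (mem_range.1 hℓ) hℓ₀ h), if_pos rfl]

theorem Fintype.exists_ne_and_ne_zero_of_sum_eq_zero {ι M : Type*} [Fintype ι] [DecidableEq ι]
    [AddCommMonoid M] {f : ι → M} (hf : ∑ i, f i = 0) {a : ι} (ha : f a ≠ 0) :
    ∃ b ≠ a, f b ≠ 0 := by
  by_contra! h
  exact ha (by rwa [Fintype.sum_eq_single a h] at hf)

theorem Nat.add_one_mod_ne_self {k ℓ : ℕ} (hk : 2 ≤ k) (hℓ : ℓ < k) : (ℓ + 1) % k ≠ ℓ := by
  rcases Nat.lt_or_ge (ℓ + 1) k with h | h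
  · rw [Nat.mod_eq_of_lt h]; omega
  · rw [show ℓ + 1 = k by omega, Nat.mod_self]; omega

theorem Nat.add_one_mod_eq_one_iff {k ℓ : ℕ} (hk : 2 ≤ k) (hℓ : ℓ < k) :
    (ℓ + 1) % k = 1 ↔ ℓ = 0 := by
  rcases Nat.lt_or_ge (ℓ + 1) k with h | h
  · rw [Nat.mod_eq_of_lt h]; omega
  · rw [show ℓ + 1 = k by omega, Nat.mod_self]; omega

theorem Set.injOn_Iio_of_forall_lt_ne {α : Type*} {f : ℕ → α} {b : ℕ}
    (h : ∀ y < b, ∀ x < y, f x ≠ f y) : InjOn f (Iio b) := by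
  intro x hx y hy hxy
  by_contra hne
  rcases lt_or_gt_of_ne hne with h' | h'
  exacts [h y hy x h' hxy, h x hx y h' hxy.symm]

theorem Set.InjOn.comp_const_add {α : Type*} {f : ℕ → α} {b : ℕ} (hf : InjOn f (Iio b))
    {a k : ℕ} (h : a + k ≤ b) : InjOn (fun ℓ => f (a + ℓ)) (Iio k) := by
  intro x hx y hy hxy
  have := hf (show a + x < b by rw [mem_Iio] at hx; omega)
    (show a + y < b by rw [mem_Iio] at hy; omega) hxy
  omega

section Cycles

variable {m n : ℕ}

def cycleEdges (k : ℕ) (I : ℕ → Fin m) (J : ℕ → Fin n) : Finset (Fin m × Fin n) :=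
  ((range k).image fun ℓ => (I ℓ, J ℓ)) ∪ ((range k).image fun ℓ => (I ((ℓ + 1) % k), J ℓ))

theorem isSimpleCycle_iff {C : Finset (Fin m × Fin n)} :
    IsSimpleCycle C ↔ ∃ k, 2 ≤ k ∧ ∃ (I : ℕ → Fin m) (J : ℕ → Fin n),
      Set.InjOn I (Set.Iio k) ∧ Set.InjOn J (Set.Iio k) ∧ C = cycleEdges k I J :=
  Iff.rfl

theorem mem_cycleEdges {k : ℕ} {I : ℕ → Fin m} {J : ℕ → Fin n} {p : Fin m × Fin n} :
    p ∈ cycleEdges k I J ↔ ∃ ℓ < k, p = (I ℓ, J ℓ) ∨ p = (I ((ℓ + 1) % k), J ℓ) := by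
  simp only [cycleEdges, mem_union, mem_image, mem_range]
  grind

/-- The walk `I 0, J 0, I 1, J 1, …` through the edges `(I ℓ, J ℓ)` and `(I (ℓ + 1), J ℓ)` of
`S`. -/
def IsNonbacktrackingWalk (S : Set (Fin m × Fin n)) (I : ℕ → Fin m) (J : ℕ → Fin n) : Prop :=
  ∀ ℓ, (I ℓ, J ℓ) ∈ S ∧ (I (ℓ + 1), J ℓ) ∈ S ∧ I (ℓ + 1) ≠ I ℓ ∧ J (ℓ + 1) ≠ J ℓ

theorem exists_isNonbacktrackingWalk {S : Set (Fin m × Fin n)} (hS : S.Nonempty)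
    (hrow : ∀ p ∈ S, ∃ j ≠ p.2, (p.1, j) ∈ S) (hcol : ∀ p ∈ S, ∃ i ≠ p.1, (i, p.2) ∈ S) :
    ∃ I J, IsNonbacktrackingWalk S I J := by
  have hstep : ∀ p : S, ∃ q : S, q.1.1 ≠ p.1.1 ∧ q.1.2 ≠ p.1.2 ∧ (q.1.1, p.1.2) ∈ S := by
    rintro ⟨p, hp⟩
    obtain ⟨i, hi, hiS⟩ := hcol p hp
    obtain ⟨j, hj, hjS⟩ := hrow _ hiS
    exact ⟨⟨(i, j), hjS⟩, hi, hj, hiS⟩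
  choose next hnext using hstep
  obtain ⟨p₀, hp₀⟩ := hS
  let W : ℕ → S := fun ℓ => next^[ℓ] ⟨p₀, hp₀⟩
  have hW : ∀ ℓ, W (ℓ + 1) = next (W ℓ) := fun ℓ => iterate_succ_apply' next ℓ _
  refine ⟨fun ℓ => (W ℓ).1.1, fun ℓ => (W ℓ).1.2, fun ℓ => ?_⟩
  simp only [hW]
  exact ⟨(W ℓ).2, (hnext (W ℓ)).2.2, (hnext (W ℓ)).1, (hnext (W ℓ)).2.1⟩

namespace IsNonbacktrackingWalk

variable {S : Set (Fin m × Fin n)} {I : ℕ → Fin m} {J : ℕ → Fin n}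

theorem shift (hW : IsNonbacktrackingWalk S I J) (s : ℕ) :
    IsNonbacktrackingWalk S (fun ℓ => I (s + ℓ)) (fun ℓ => J (s + ℓ)) :=
  fun ℓ => by simpa only [add_assoc] using hW (s + ℓ)

theorem exists_isSimpleCycle_of_closing (hW : IsNonbacktrackingWalk S I J) {k : ℕ} (hk : 2 ≤ k)
    (hI : Set.InjOn I (Set.Iio k)) (hJ : Set.InjOn J (Set.Iio k))
    (hclose : (I 0, J (k - 1)) ∈ S) :
    ∃ C : Finset (Fin m × Fin n), ↑C ⊆ S ∧ IsSimpleCycle C := by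
  refine ⟨cycleEdges k I J, fun p hp => ?_, k, hk, I, J, hI, hJ, rfl⟩
  obtain ⟨ℓ, hℓ, rfl | rfl⟩ := mem_cycleEdges.1 hp
  · exact (hW ℓ).1
  · rcases Nat.lt_or_ge (ℓ + 1) k with h | h
    · rw [Nat.mod_eq_of_lt h]; exact (hW ℓ).2.1
    · rwa [show ℓ = k - 1 by omega, Nat.sub_add_cancel (by omega), Nat.mod_self]

theorem exists_isSimpleCycle_of_fst_eq (hW : IsNonbacktrackingWalk S I J) {a b : ℕ}
    (hab : a < b) (hIab : I a = I b) (hI : Set.InjOn I (Set.Iio b))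
    (hJ : Set.InjOn J (Set.Iio b)) :
    ∃ C : Finset (Fin m × Fin n), ↑C ⊆ S ∧ IsSimpleCycle C := by
  refine (hW.shift a).exists_isSimpleCycle_of_closing (k := b - a) ?_
    (hI.comp_const_add (by omega)) (hJ.comp_const_add (by omega)) ?_
  · by_contra hk
    exact (hW a).2.2.1 (by rw [show a + 1 = b by omega, hIab])
  · simpa only [add_zero, hIab, show a + (b - a - 1) + 1 = b by omega] using
      (hW (a + (b - a - 1))).2.1

theorem exists_isSimpleCycle_of_snd_eq (hW : IsNonbacktrackingWalk S I J) {a b : ℕ}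
    (hab : a < b) (hJab : J a = J b) (hI : Set.InjOn I (Set.Iio (b + 1)))
    (hJ : Set.InjOn J (Set.Iio b)) :
    ∃ C : Finset (Fin m × Fin n), ↑C ⊆ S ∧ IsSimpleCycle C := by
  refine (hW.shift (a + 1)).exists_isSimpleCycle_of_closing (k := b - a) ?_
    (hI.comp_const_add (by omega)) ?_ ?_
  · by_contra hk
    exact (hW a).2.2.2 (by rw [show a + 1 = b by omega, hJab])
  · intro x hx y hy h
    simp only [Set.mem_Iio] at hx hy h
    -- the last vertex `J b` of the shifted walk is `J a`, which lies before the segment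
    have hσ : ∀ z < b - a, J (a + 1 + z) = J (if a + 1 + z = b then a else a + 1 + z) := by
      intro z hz
      split_ifs with hz'
      · rw [hz', hJab]
      · rfl
    rw [hσ x hx, hσ y hy] at h
    have := hJ (show _ < b by split_ifs <;> omega) (show _ < b by split_ifs <;> omega) h
    split_ifs at this <;> omega
  · simpa only [add_zero, show a + 1 + (b - a - 1) = b by omega, ← hJab] using (hW a).2.1

/-- The first repeated vertex in `I 0, J 0, I 1, J 1, …` closes a simple cycle. -/
theorem exists_isSimpleCycle (hW : IsNonbacktrackingWalk S I J) :
    ∃ C : Finset (Fin m × Fin n), ↑C ⊆ S ∧ IsSimpleCycle C := by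
  classical
  have hrep : ∃ b, ∃ a < b, I a = I b ∨ J a = J b := by
    obtain ⟨a, b, hab, h⟩ := Finite.exists_ne_map_eq_of_infinite I
    rcases hab.lt_or_gt with h' | h'
    exacts [⟨b, a, h', Or.inl h⟩, ⟨a, b, h', Or.inl h.symm⟩]
  set b := Nat.find hrep
  have hfirst : ∀ y < b, ∀ x < y, I x ≠ I y ∧ J x ≠ J y := fun y hy x hx => by
    have := Nat.find_min hrep hy
    push Not at this
    exact this x hx
  have hJ := Set.injOn_Iio_of_forall_lt_ne fun y hy x hx => (hfirst y hy x hx).2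
  by_cases hIrep : ∃ a < b, I a = I b
  · obtain ⟨a, hab, hIab⟩ := hIrep
    exact hW.exists_isSimpleCycle_of_fst_eq hab hIab
      (Set.injOn_Iio_of_forall_lt_ne fun y hy x hx => (hfirst y hy x hx).1) hJ
  · push Not at hIrep
    obtain ⟨a, hab, hIJ⟩ := Nat.find_spec hrep
    refine hW.exists_isSimpleCycle_of_snd_eq hab (hIJ.resolve_left (hIrep a hab))
      (Set.injOn_Iio_of_forall_lt_ne fun y hy x hx => ?_) hJ
    rcases Nat.lt_or_ge y b with h | h
    exacts [(hfirst y h x hx).1, show y = b by omega ▸ hIrep x (by omega)]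

end IsNonbacktrackingWalk

end Cycles

section LineSums

variable {m n : ℕ} {M : Type*} [AddCommMonoid M]

def HasZeroLineSums (y : Fin m × Fin n → M) : Prop :=
  (∀ i, ∑ j, y (i, j) = 0) ∧ ∀ j, ∑ i, y (i, j) = 0

namespace HasZeroLineSums

variable {y : Fin m × Fin n → M}

/-- `gridH` checks only the first `n - 1` columns; the last column sum follows from the row
sums. -/
theorem of_forall_lt_sub_one (hrow : ∀ i, ∑ j, y (i, j) = 0)
    (hcol : ∀ j : Fin n, (j : ℕ) < n - 1 → ∑ i, y (i, j) = 0) : HasZeroLineSums y := by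
  refine ⟨hrow, fun j => ?_⟩
  by_cases hj : (j : ℕ) < n - 1
  · exact hcol j hj
  have htot : ∑ j, ∑ i, y (i, j) = 0 := by
    rw [sum_comm]
    exact sum_eq_zero fun i _ => hrow i
  rwa [Fintype.sum_eq_single j fun j' hj' => hcol j' (by have := Fin.val_ne_of_ne hj'; omega)]
    at htot

theorem sub_smul {R : Type*} [Ring R] {y z : Fin m × Fin n → R} (hy : HasZeroLineSums y)
    (hz : HasZeroLineSums z) (t : R) : HasZeroLineSums (y - t • z) := by
  constructor <;> intro i <;>
    simp only [Pi.sub_apply, Pi.smul_apply, smul_eq_mul, sum_sub_distrib, ← mul_sum, hy.1, hy.2,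
      hz.1, hz.2, mul_zero, sub_zero]

theorem exists_isSimpleCycle_subset_support (hy : HasZeroLineSums y) (hy0 : y ≠ 0) :
    ∃ C : Finset (Fin m × Fin n), ↑C ⊆ support y ∧ IsSimpleCycle C := by
  obtain ⟨I, J, hW⟩ := exists_isNonbacktrackingWalk (support_nonempty_iff.2 hy0)
    (fun p hp => Fintype.exists_ne_and_ne_zero_of_sum_eq_zero (hy.1 p.1) hp)
    (fun p hp => Fintype.exists_ne_and_ne_zero_of_sum_eq_zero (hy.2 p.2) hp)
  exact hW.exists_isSimpleCycle

theorem eq_zero_of_support_subset (hy : HasZeroLineSums y) {E : Finset (Fin m × Fin n)}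
    (hE : IsAcyclicEdges E) (hyE : support y ⊆ E) : y = 0 := by
  by_contra hy0
  obtain ⟨C, hC, hCcyc⟩ := hy.exists_isSimpleCycle_subset_support hy0
  exact hE C (by exact_mod_cast hC.trans hyE) hCcyc

end HasZeroLineSums

end LineSums

section CycleVec

variable {m n : ℕ} (R : Type*) [Ring R]

def cycleVec (k : ℕ) (I : ℕ → Fin m) (J : ℕ → Fin n) : Fin m × Fin n → R :=
  ∑ ℓ ∈ range k, (Pi.single (I ℓ, J ℓ) 1 - Pi.single (I ((ℓ + 1) % k), J ℓ) 1)

variable {R} {k : ℕ} {I : ℕ → Fin m} {J : ℕ → Fin n}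

theorem dotProduct_cycleVec (g : Fin m × Fin n → R) :
    g ⬝ᵥ cycleVec R k I J = ∑ ℓ ∈ range k, (g (I ℓ, J ℓ) - g (I ((ℓ + 1) % k), J ℓ)) := by
  simp only [cycleVec, dotProduct_sum, dotProduct_sub, dotProduct_single_one]

theorem cycleVec_apply (p : Fin m × Fin n) :
    cycleVec R k I J p = ∑ ℓ ∈ range k,
      ((if p = (I ℓ, J ℓ) then 1 else 0) - if p = (I ((ℓ + 1) % k), J ℓ) then 1 else 0) := by
  simp only [cycleVec, Finset.sum_apply, Pi.sub_apply, Pi.single_apply]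

theorem hasZeroLineSums_cycleVec (hk : 0 < k) : HasZeroLineSums (cycleVec R k I J) := by
  constructor <;> intro i <;> simp only [cycleVec_apply] <;> rw [sum_comm]
  · simp only [Prod.mk.injEq, ite_and, sum_sub_distrib, sum_ite_irrel, sum_ite_eq', mem_univ,
      if_true, sum_const_zero]
    rw [sum_range_comp_add_one_mod (fun ℓ => if i = I ℓ then (1 : R) else 0) hk, sub_self]
  · simp only [Prod.mk.injEq, ite_and, sum_sub_distrib, sum_ite_eq', mem_univ, if_true, sub_self,
      sum_const_zero]

theorem cycleVec_apply_of_injOn (hJ : Set.InjOn J (Set.Iio k)) {ℓ : ℕ} (hℓ : ℓ < k)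
    (i : Fin m) : cycleVec R k I J (i, J ℓ) =
      (if i = I ℓ then 1 else 0) - if i = I ((ℓ + 1) % k) then 1 else 0 := by
  rw [cycleVec_apply, sum_eq_single_of_mem ℓ (mem_range.2 hℓ)]
  · simp only [Prod.mk.injEq, and_true]
  intro ℓ' hℓ' hne
  have hJne : J ℓ ≠ J ℓ' := fun h => hne (hJ (mem_range.1 hℓ') hℓ h.symm)
  simp [hJne]

theorem cycleVec_ne_zero_of_mem [Nontrivial R] (hk : 2 ≤ k) (hI : Set.InjOn I (Set.Iio k))
    (hJ : Set.InjOn J (Set.Iio k)) {p : Fin m × Fin n} (hp : p ∈ cycleEdges k I J) :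
    cycleVec R k I J p ≠ 0 := by
  obtain ⟨ℓ, hℓ, hp⟩ := mem_cycleEdges.1 hp
  have hsucc : I ((ℓ + 1) % k) ≠ I ℓ := fun h =>
    Nat.add_one_mod_ne_self hk hℓ (hI (Nat.mod_lt _ (by omega)) hℓ h)
  rcases hp with rfl | rfl <;> rw [cycleVec_apply_of_injOn hJ hℓ]
  · simp [hsucc.symm]
  · simp [hsucc]

theorem support_cycleVec_subset : support (cycleVec R k I J) ⊆ cycleEdges k I J := by
  intro p hp
  by_contra hpC
  refine hp ((cycleVec_apply p).trans (sum_eq_zero fun ℓ hℓ => ?_))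
  rw [if_neg, if_neg, sub_self] <;> rintro rfl <;>
    exact hpC (mem_cycleEdges.2 ⟨ℓ, mem_range.1 hℓ, by simp⟩)

end CycleVec

section MR

variable {m n : ℕ} {F : Type*} [Field F]

theorem eq_zero_of_cycleSum_ne_zero {γ : Fin m × Fin n → F}
    (hγ : ∀ C g, IsGammaCycleSumOf γ C g → g ≠ 0) {E' F' : Finset (Fin m × Fin n)}
    (hE' : IsAcyclicEdges E') (hF' : F'.card ≤ 1) {y : Fin m × Fin n → F}
    (hy : HasZeroLineSums y) (hγy : γ ⬝ᵥ y = 0) (hyE : support y ⊆ ↑(E' ∪ F')) : y = 0 := by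
  classical
  by_contra hy0
  obtain ⟨C, hCy, hC⟩ := hy.exists_isSimpleCycle_subset_support hy0
  obtain ⟨f, hfC, hfE'⟩ : ∃ f ∈ C, f ∉ E' := by
    by_contra! h
    exact hE' C h hC
  obtain ⟨k, hk, I, J, hI, hJ, rfl⟩ := isSimpleCycle_iff.1 hC
  have hfF' : f ∈ F' := (mem_union.1 (hyE (hCy hfC))).resolve_left hfE'
  have hχf := cycleVec_ne_zero_of_mem (R := F) hk hI hJ hfC
  set t := y f / cycleVec F k I J f
  have hyt : y = t • cycleVec F k I J := by
    rw [← sub_eq_zero]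
    refine (hy.sub_smul (hasZeroLineSums_cycleVec (by omega)) t).eq_zero_of_support_subset hE' ?_
    intro p hp
    have hpf : p ≠ f := by
      rintro rfl
      simp [t, div_mul_cancel₀ _ hχf] at hp
    have hpE : p ∈ E' ∪ F' := by
      by_cases hyp : y p = 0
      · exact hyE (hCy (support_cycleVec_subset (R := F) fun hχp => hp (by simp [hyp, hχp])))
      · exact hyE hyp
    exact (mem_union.1 hpE).resolve_right fun hpF => hpf (card_le_one.1 hF' p hpF f hfF')
  have ht : t ≠ 0 := div_ne_zero (hCy hfC) hχf
  refine hγ _ _ ⟨k, hk, I, J, hI, hJ, rfl, rfl⟩ ?_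
  rwa [hyt, dotProduct_smul, dotProduct_cycleVec, smul_eq_zero, or_iff_right ht] at hγy

variable {h : ℕ} {c : Fin m × Fin n → Fin h → F} {y : Fin m × Fin n → F}

theorem HasZeroLineSums.of_gridH_mulVec_eq_zero (hy : gridH F m n h c *ᵥ y = 0) :
    HasZeroLineSums y := by
  refine .of_forall_lt_sub_one (fun i => ?_) (fun j hj => ?_)
  · have := congrFun hy (.inl i)
    simp only [gridH, mulVec, dotProduct, of_apply, Sum.elim_inl, ite_mul, one_mul, zero_mul,
      Fintype.sum_prod_type, Pi.zero_apply] at this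
    rw [Fintype.sum_eq_single i fun i' hi' => sum_eq_zero fun j _ => if_neg hi'] at this
    simpa using this
  · have := congrFun hy (.inr (.inl ⟨j, hj⟩))
    simp only [gridH, mulVec, dotProduct, of_apply, Sum.elim_inr, Sum.elim_inl, ite_mul, one_mul,
      zero_mul, Fintype.sum_prod_type_right, Pi.zero_apply] at this
    rw [Fintype.sum_eq_single j fun j' hj' => sum_eq_zero fun i _ => if_neg (Fin.val_ne_of_ne hj')]
      at this
    simpa using this

theorem dotProduct_eq_zero_of_gridH_mulVec_eq_zero (hy : gridH F m n h c *ᵥ y = 0) (r : Fin h) :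
    (fun p => c p r) ⬝ᵥ y = 0 := by
  simpa [gridH, mulVec, dotProduct, mul_comm] using congrFun hy (.inr (.inr r))

theorem isMR_of_cycleSum_ne_zero {γ : Fin m × Fin n → F}
    (hγ : ∀ C g, IsGammaCycleSumOf γ C g → g ≠ 0) : IsMR F m n 1 (fun ij _ => γ ij) := by
  classical
  rintro _ ⟨E', F', hE', hF', rfl⟩
  rw [← rank_transpose, LinearIndependent.rank_matrix, Fintype.card_coe]
  show LinearIndepOn F (fun p r => gridH F m n 1 (fun ij _ => γ ij) r p) ↑(E' ∪ F')
  rw [linearIndepOn_finset_iff]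
  intro g hg p hp
  let y : Fin m × Fin n → F := fun p => if p ∈ E' ∪ F' then g p else 0
  have hHy : gridH F m n 1 (fun ij _ => γ ij) *ᵥ y = 0 := by
    ext r
    have := congrFun hg r
    simp only [Finset.sum_apply, Pi.smul_apply, smul_eq_mul, Pi.zero_apply] at this
    simp only [mulVec, dotProduct, y, mul_ite, mul_zero, sum_ite_mem, univ_inter, Pi.zero_apply]
    simpa only [mul_comm] using this
  have hy0 := eq_zero_of_cycleSum_ne_zero hγ hE' hF' (.of_gridH_mulVec_eq_zero hHy)
    (dotProduct_eq_zero_of_gridH_mulVec_eq_zero hHy 0) fun q hq => by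
      by_contra hqE
      exact hq (if_neg hqE)
  simpa [y, mem_union.1 hp] using congrFun hy0 p

end MR

theorem AffineIndependent.sum_smul_sub_ne_zero {K V ι κ : Type*} [Field K] [AddCommGroup V]
    [Module K V] {α : ι → V} (hα : AffineIndependent K α) {β : κ → K} (hβ : Injective β)
    {k : ℕ} (hk : 2 ≤ k) {I : ℕ → ι} {J : ℕ → κ} (hI : Set.InjOn I (Set.Iio k))
    (hJ : Set.InjOn J (Set.Iio k)) :
    ∑ ℓ ∈ range k, (β (J ℓ) • α (I ℓ) - β (J ℓ) • α (I ((ℓ + 1) % k))) ≠ 0 := by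
  classical
  intro hsum
  have hsucc : ∀ ℓ ∈ range k, (ℓ + 1) % k ∈ range k := fun ℓ _ =>
    mem_range.2 (Nat.mod_lt _ (by omega))
  let s := (range k).image I
  let w : ι → K := fun i => ∑ ℓ ∈ range k,
    ((if I ℓ = i then β (J ℓ) else 0) - if I ((ℓ + 1) % k) = i then β (J ℓ) else 0)
  have hw : ∑ i ∈ s, w i = 0 := by
    rw [sum_comm]
    refine sum_eq_zero fun ℓ hℓ => ?_
    rw [sum_sub_distrib, sum_ite_eq, sum_ite_eq, if_pos (mem_image_of_mem I hℓ),
      if_pos (mem_image_of_mem I (hsucc ℓ hℓ)), sub_self]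
  have hwα : ∑ i ∈ s, w i • α i = 0 := by
    simp only [w, sum_smul, sub_smul, ite_smul, zero_smul]
    rw [sum_comm]
    refine (sum_congr rfl fun ℓ hℓ => ?_).trans hsum
    rw [sum_sub_distrib, sum_ite_eq, sum_ite_eq, if_pos (mem_image_of_mem I hℓ),
      if_pos (mem_image_of_mem I (hsucc ℓ hℓ))]
  have h1 : (1 : ℕ) < k := by omega
  have hw1 : w (I 1) = β (J 1) - β (J 0) := by
    simp only [w, sum_sub_distrib, sum_range_ite_apply_eq hI h1, sub_right_inj]
    rw [sum_eq_single_of_mem 0 (mem_range.2 (by omega)) fun ℓ hℓ hne => if_neg fun h =>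
      hne ((Nat.add_one_mod_eq_one_iff hk (mem_range.1 hℓ)).1
        (hI (mem_range.1 (hsucc ℓ hℓ)) h1 h))]
    rw [if_pos (by rw [zero_add, Nat.mod_eq_of_lt h1])]
  have := hα.eq_zero_of_sum_eq_zero hw hwα (I 1) (mem_image_of_mem I (mem_range.2 h1))
  rw [hw1, sub_eq_zero] at this
  exact one_ne_zero (hJ h1 (show 0 < k by omega) (hβ this))

theorem FiniteField.exists_subfield_natCard {F : Type*} [Field F] [Finite F] (p : ℕ)
    [Fact p.Prime] {t d : ℕ} (ht : t ≠ 0) (hF : Nat.card F = p ^ (t * d)) :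
    ∃ K : Subfield F, Nat.card K = p ^ t := by
  have := Fintype.ofFinite F
  have : CharP F p := charP_of_card_eq_prime_pow (by rwa [← Nat.card_eq_fintype_card])
  let := ZMod.algebra F p
  have hrank : Module.finrank (ZMod p) F = t * d :=
    Nat.pow_right_injective (Fact.out : p.Prime).two_le
      (by simp only [FiniteField.pow_finrank_eq_natCard, hF])
  obtain ⟨f⟩ := FiniteField.nonempty_algHom_of_finrank_dvd (K := GaloisField p t) (L := F)
    (by rw [GaloisField.finrank p ht, hrank]; exact dvd_mul_right t d)
  refine ⟨(f : GaloisField p t →+* F).fieldRange, ?_⟩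
  rw [← GaloisField.card p t ht]
  exact Nat.card_congr (Equiv.ofInjective f f.injective).symm

/-- Theorem 3.6.  Let `m ≥ 2` and let `n ≥ 2` be a power of `2`.  Over
any field with `q = n ^ (m - 1)` elements there is an MR `(m, n, a=1, b=1, h=1)` grid
code, which can be taken to be a Gabidulin construction: for `h = 1` this means the
single global parity row has entries `γ(i,j)`. -/
theorem statement5 (m n : ℕ) (hm : 2 ≤ m) (hn2 : 2 ≤ n) (hn : ∃ t : ℕ, n = 2 ^ t)
    (F : Type*) [Field F] [Fintype F] (hcard : Fintype.card F = n ^ (m - 1)) :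
    ∃ γ : Fin m × Fin n → F, IsMR F m n 1 (fun ij _ => γ ij) := by
  obtain ⟨t, rfl⟩ := hn
  have ht : t ≠ 0 := by
    rintro rfl
    norm_num at hn2
  obtain ⟨K, hK⟩ := FiniteField.exists_subfield_natCard (F := F) 2 ht (d := m - 1)
    (by rw [Nat.card_eq_fintype_card, hcard, pow_mul])
  have hrank : Module.finrank K F = m - 1 := Nat.pow_right_injective hn2 <| by
    change (2 ^ t) ^ _ = (2 ^ t) ^ _
    rw [← hK, ← Module.natCard_eq_pow_finrank, hK, Nat.card_eq_fintype_card, hcard]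
  obtain ⟨α⟩ := AffineBasis.exists_affineBasis_of_finiteDimensional (ι := Fin m) (k := K) (P := F)
    (by rw [Fintype.card_fin, hrank]; omega)
  let β := (Finite.equivFinOfCardEq hK).symm
  refine ⟨fun p => (β p.2 : K) • α p.1, isMR_of_cycleSum_ne_zero ?_⟩
  rintro C g ⟨k, hk, I, J, hI, hJ, -, rfl⟩
  exact α.ind.sum_smul_sub_ne_zero β.injective hk hI hJ
end

section
/- Let m ≥ 2, h ≥ 1, let n ≥ 2 be a power of two, and let 2^k be the least power of two strictly greater than m. Let q = 2·(2^k · n)^{m+h−1} (a power of 2, and q ≤ 2·(2mn)^{m+h−1}). Then there exists an MR (m, n, a=1, b=1, h) grid code over F_q, which moreover can be taken to be a Gabidulin construction. -/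
open Finset

/-!
Write `r = m + h - 1` and `d = k + t` where `n = 2 ^ t`, so that `|F| = 2 ^ (1 + d r)` and
`F ≅ 𝔽₂ × 𝔽_{2^d} ^ r` as `𝔽₂`-spaces. Embed the cells into `𝔽_{2^d}` by `φ` and put
`γ(e) = (1, φ e, φ e ^ 3, …, φ e ^ (2r - 1))`. As for BCH codes, no nonempty set of at most `2r`
cells has `γ`-sum zero: in characteristic two the even power sums are squares of smaller ones, so
all power sums of exponent `< 2r` of its image vanish, which a Vandermonde determinant forbids.

If `E = E' ∪ F'` with `E'` a forest and `|F'| ≤ h`, a kernel vector of `H|_E` is a vector `y` of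
the cycle space of `E` (zero row and column sums, supported on `E`) with
`∑ y_e γ_e ^ 2 ^ l = 0` for `l < h`. The cycle space has dimension at most `|F'| ≤ h` and a basis
of cycle indicators `v`; expanding `y = ∑ α_v v`, the global checks become the Moore system
`∑ α_v β_v ^ 2 ^ l = 0` with `β_v = ∑_{e ∈ v} γ_e`. A nonempty subset sum of the `β_v` is the
`γ`-sum of a set meeting every column an even number of times and covered by a forest plus `h`
cells, hence of at most `2r` cells, so it is nonzero. Thus the `β_v` are `𝔽₂`-independent, their
Moore matrix is invertible, and `α = 0`.
-/

section Cycles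

variable {m n : ℕ}

theorem Set.injOn_Iio_of_ne {α : Type*} {f : ℕ → α} {N : ℕ}
    (hf : ∀ u < N, ∀ s < u, f s ≠ f u) : Set.InjOn f (Set.Iio N) := by
  intro a ha b hb hab
  by_contra hne
  rcases lt_or_gt_of_ne hne with h | h
  · exact hf b hb a h hab
  · exact hf a ha b h hab.symm

theorem Set.InjOn.comp_const_add_s6 {α : Type*} {f : ℕ → α} {s k T : ℕ}
    (hf : Set.InjOn f (Set.Iio T)) (hk : s + k ≤ T) :
    Set.InjOn (fun ℓ => f (s + ℓ)) (Set.Iio k) :=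
  hf.comp (add_right_injective s).injOn fun ℓ hℓ => show s + ℓ < T by simp at hℓ; omega

theorem exists_isSimpleCycle_of_closedWalk {S : Finset (Fin m × Fin n)} {k : ℕ} (hk : 2 ≤ k)
    {I : ℕ → Fin m} {J : ℕ → Fin n} (hI : Set.InjOn I (Set.Iio k))
    (hJ : Set.InjOn J (Set.Iio k)) (hdiag : ∀ ℓ < k, (I ℓ, J ℓ) ∈ S)
    (hstep : ∀ ℓ, ℓ + 1 < k → (I (ℓ + 1), J ℓ) ∈ S) (hclose : (I 0, J (k - 1)) ∈ S) :
    ∃ C ⊆ S, IsSimpleCycle C := by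
  refine ⟨_, ?_, k, hk, I, J, hI, hJ, rfl⟩
  simp only [Finset.union_subset_iff, Finset.image_subset_iff, Finset.mem_range]
  refine ⟨hdiag, fun ℓ hℓ => ?_⟩
  rcases Nat.lt_or_ge (ℓ + 1) k with hlt | hge
  · rw [Nat.mod_eq_of_lt hlt]
    exact hstep ℓ hlt
  · rw [show ℓ + 1 = k by omega, Nat.mod_self, show ℓ = k - 1 by omega]
    exact hclose

theorem exists_isSimpleCycle_of_row_repeat {S : Finset (Fin m × Fin n)} {I : ℕ → Fin m}
    {J : ℕ → Fin n} (hdiag : ∀ t, (I t, J t) ∈ S) (hstep : ∀ t, (I (t + 1), J t) ∈ S)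
    {s T : ℕ} (hsT : s + 2 ≤ T) (hI : Set.InjOn I (Set.Iio T)) (hJ : Set.InjOn J (Set.Iio T))
    (hs : I s = I T) :
    ∃ C ⊆ S, IsSimpleCycle C := by
  have hsT' : s + (T - s) ≤ T := by omega
  refine exists_isSimpleCycle_of_closedWalk (by omega) (hI.comp_const_add_s6 hsT')
    (hJ.comp_const_add_s6 hsT') (fun ℓ _ => hdiag _) (fun ℓ _ => hstep _) ?_
  simpa only [add_zero, show s + (T - s - 1) + 1 = T by omega, ← hs] using
    hstep (s + (T - s - 1))

theorem exists_isSimpleCycle_of_col_repeat {S : Finset (Fin m × Fin n)} {I : ℕ → Fin m}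
    {J : ℕ → Fin n} (hdiag : ∀ t, (I t, J t) ∈ S) (hstep : ∀ t, (I (t + 1), J t) ∈ S)
    {s T : ℕ} (hsT : s + 2 ≤ T) (hI : Set.InjOn I (Set.Iio (T + 1)))
    (hJ : Set.InjOn J (Set.Iio T)) (hs : J s = J T) :
    ∃ C ⊆ S, IsSimpleCycle C := by
  -- the columns `J (s + 1), …, J T` are distinct because `J T = J s`
  have hJ' : Set.InjOn (fun ℓ => J (s + 1 + ℓ)) (Set.Iio (T - s)) := by
    refine Set.injOn_Iio_of_ne fun u hu a ha h => ?_
    rcases Nat.lt_or_ge (s + 1 + u) T with hlt | hge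
    · exact absurd (hJ (show s + 1 + a < T by omega) hlt h) (by omega)
    · rw [show s + 1 + u = T by omega, ← hs] at h
      exact absurd (hJ (show s + 1 + a < T by omega) (show s < T by omega) h) (by omega)
  have hsT' : s + 1 + (T - s) ≤ T + 1 := by omega
  refine exists_isSimpleCycle_of_closedWalk (by omega) (hI.comp_const_add_s6 hsT') hJ'
    (fun ℓ _ => hdiag _) (fun ℓ _ => by simpa only [add_assoc] using hstep (s + 1 + ℓ)) ?_
  simpa only [add_zero, show s + 1 + (T - s - 1) = T by omega, ← hs] using hstep s

/-- The walk visits `(I 0, J 0), (I 1, J 0), (I 1, J 1), (I 2, J 1), …`; a simple cycle is cut out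
at the first time a row or a column is revisited. -/
theorem exists_isSimpleCycle_of_walk {S : Finset (Fin m × Fin n)} {I : ℕ → Fin m}
    {J : ℕ → Fin n} (hdiag : ∀ t, (I t, J t) ∈ S) (hstep : ∀ t, (I (t + 1), J t) ∈ S)
    (hI : ∀ t, I (t + 1) ≠ I t) (hJ : ∀ t, J (t + 1) ≠ J t) :
    ∃ C ⊆ S, IsSimpleCycle C := by
  have hrep : ∃ T, (∃ s < T, I s = I T) ∨ (∃ s < T, J s = J T) := by
    obtain ⟨a, b, hab, h⟩ := Fintype.exists_ne_map_eq_of_card_lt (fun t : Fin (m + 1) => I t)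
      (by simp)
    rcases lt_or_gt_of_ne (Fin.val_ne_of_ne hab) with hlt | hlt
    · exact ⟨b, Or.inl ⟨a, hlt, h⟩⟩
    · exact ⟨a, Or.inl ⟨b, hlt, h.symm⟩⟩
  have hT := Nat.find_spec hrep
  have hTmin : ∀ u < Nat.find hrep, _ := fun u hu => Nat.find_min hrep hu
  generalize Nat.find hrep = T at hT hTmin
  have hIinj : Set.InjOn I (Set.Iio T) :=
    Set.injOn_Iio_of_ne fun u hu s hs h => hTmin u hu (Or.inl ⟨s, hs, h⟩)
  have hJinj : Set.InjOn J (Set.Iio T) :=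
    Set.injOn_Iio_of_ne fun u hu s hs h => hTmin u hu (Or.inr ⟨s, hs, h⟩)
  by_cases hrow : ∃ s < T, I s = I T
  · obtain ⟨s, hsT, hs⟩ := hrow
    refine exists_isSimpleCycle_of_row_repeat hdiag hstep ?_ hIinj hJinj hs
    by_contra
    exact hI s (by rw [show s + 1 = T by omega]; exact hs.symm)
  · obtain ⟨s, hsT, hs⟩ := hT.resolve_left hrow
    refine exists_isSimpleCycle_of_col_repeat hdiag hstep ?_ (Set.injOn_Iio_of_ne ?_) hJinj hs
    · by_contra
      exact hJ s (by rw [show s + 1 = T by omega]; exact hs.symm)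
    · intro u hu a ha h
      rcases Nat.lt_succ_iff_lt_or_eq.1 hu with hu | rfl
      · exact absurd (hIinj (ha.trans hu) hu h) ha.ne
      · exact hrow ⟨a, ha, h⟩

theorem exists_isSimpleCycle_subset {S : Finset (Fin m × Fin n)} (hne : S.Nonempty)
    (hcol : ∀ e ∈ S, ∃ e' ∈ S, e'.2 = e.2 ∧ e'.1 ≠ e.1)
    (hrow : ∀ e ∈ S, ∃ e' ∈ S, e'.1 = e.1 ∧ e'.2 ≠ e.2) :
    ∃ C ⊆ S, IsSimpleCycle C := by
  have step : ∀ e ∈ S, ∃ e' ∈ S, e'.1 ≠ e.1 ∧ e'.2 ≠ e.2 ∧ (e'.1, e.2) ∈ S := by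
    intro e he
    obtain ⟨a, haS, ha2, ha1⟩ := hcol e he
    obtain ⟨b, hbS, hb1, hb2⟩ := hrow a haS
    exact ⟨b, hbS, hb1 ▸ ha1, ha2 ▸ hb2, by rwa [hb1, ← ha2]⟩
  choose! next hnextS hnext1 hnext2 hnextS' using step
  obtain ⟨e₀, he₀⟩ := hne
  set w : ℕ → Fin m × Fin n := fun t => next^[t] e₀
  have hw : ∀ t, w (t + 1) = next (w t) := fun t => Function.iterate_succ_apply' _ _ _
  have hwS : ∀ t, w t ∈ S := fun t => by
    induction t with
    | zero => exact he₀
    | succ t ih => exact hw t ▸ hnextS _ ih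
  exact exists_isSimpleCycle_of_walk (I := fun t => (w t).1) (J := fun t => (w t).2) hwS
    (fun t => hw t ▸ hnextS' _ (hwS t)) (fun t => hw t ▸ hnext1 _ (hwS t))
    (fun t => hw t ▸ hnext2 _ (hwS t))

theorem IsSimpleCycle.nonempty {C : Finset (Fin m × Fin n)} (hC : IsSimpleCycle C) :
    C.Nonempty := by
  obtain ⟨k, hk, I, J, -, -, rfl⟩ := hC
  exact ⟨(I 0, J 0), Finset.mem_union_left _ (Finset.mem_image_of_mem _ (by simp; omega))⟩

theorem IsAcyclicEdges.exists_leaf_s6 {T : Finset (Fin m × Fin n)} (hT : IsAcyclicEdges T)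
    (hne : T.Nonempty) :
    ∃ e ∈ T, (∀ e' ∈ T, e'.1 = e.1 → e' = e) ∨ (∀ e' ∈ T, e'.2 = e.2 → e' = e) := by
  by_contra! h
  obtain ⟨C, hCT, hC⟩ := exists_isSimpleCycle_subset hne
    (fun e he => by
      obtain ⟨e', he', h2, hne'⟩ := (h e he).2
      exact ⟨e', he', h2, fun h1 => hne' (Prod.ext h1 h2)⟩)
    (fun e he => by
      obtain ⟨e', he', h1, hne'⟩ := (h e he).1
      exact ⟨e', he', h1, fun h2 => hne' (Prod.ext h1 h2)⟩)
  exact hT C hCT hC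

theorem Finset.card_image_erase_add_one {α β : Type*} [DecidableEq α] [DecidableEq β]
    {f : α → β} {T : Finset α} {e : α} (he : e ∈ T) (huniq : ∀ e' ∈ T, f e' = f e → e' = e) :
    ((T.erase e).image f).card + 1 = (T.image f).card := by
  have : (T.erase e).image f = (T.image f).erase (f e) := by
    ext b
    simp only [Finset.mem_image, Finset.mem_erase]
    constructor
    · rintro ⟨e', ⟨hne, he'⟩, rfl⟩
      exact ⟨fun h => hne (huniq e' he' h), e', he', rfl⟩
    · rintro ⟨hb, e', he', rfl⟩
      exact ⟨e', ⟨fun h => hb (h ▸ rfl), he'⟩, rfl⟩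
  rw [this, Finset.card_erase_add_one (Finset.mem_image_of_mem f he)]

/-- Removing leaves one at a time; the truncated subtraction is harmless since both sides vanish
for the empty forest. -/
theorem IsAcyclicEdges.card_le {T : Finset (Fin m × Fin n)} (hT : IsAcyclicEdges T) :
    T.card ≤ (T.image Prod.fst).card + (T.image Prod.snd).card - 1 := by
  classical
  induction T using Finset.strongInduction with
  | H T ih =>
  rcases T.eq_empty_or_nonempty with rfl | hne
  · simp
  obtain ⟨e, he, hleaf⟩ := IsAcyclicEdges.exists_leaf_s6 hT hne
  have hcard := Finset.card_erase_add_one he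
  have ih' := ih (T.erase e) (Finset.erase_ssubset he)
    (fun C hC => hT C (hC.trans (Finset.erase_subset e T)))
  have hfst := Finset.card_le_card (Finset.image_subset_image (f := Prod.fst)
    (Finset.erase_subset e T))
  have hsnd := Finset.card_le_card (Finset.image_subset_image (f := Prod.snd)
    (Finset.erase_subset e T))
  have hfst0 := (hne.image Prod.fst).card_pos
  have hsnd0 := (hne.image Prod.snd).card_pos
  rcases hleaf with h | h
  · have := Finset.card_image_erase_add_one he h
    omega
  · have := Finset.card_image_erase_add_one he h
    omega

theorem card_le_of_two_le_card_column {h : ℕ} {D E' F' : Finset (Fin m × Fin n)}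
    (hD : D.Nonempty) (hDE : D ⊆ E' ∪ F') (hE' : IsAcyclicEdges E') (hF' : F'.card ≤ h)
    (hcol : ∀ j ∈ D.image Prod.snd, 2 ≤ (D.filter (·.2 = j)).card) :
    D.card ≤ 2 * (m + h - 1) := by
  classical
  set T := D ∩ E'
  have hDT : D.card ≤ T.card + h := by
    calc D.card ≤ (T ∪ F').card := Finset.card_le_card fun e he => by
          rcases Finset.mem_union.1 (hDE he) with h' | h'
          · exact Finset.mem_union_left _ (Finset.mem_inter.2 ⟨he, h'⟩)
          · exact Finset.mem_union_right _ h'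
      _ ≤ T.card + F'.card := Finset.card_union_le _ _
      _ ≤ T.card + h := by omega
  have hT := IsAcyclicEdges.card_le (T := T) fun C hC => hE' C (hC.trans Finset.inter_subset_right)
  have hTfst : (T.image Prod.fst).card ≤ m :=
    (Finset.card_le_univ _).trans_eq (Fintype.card_fin m)
  have hTsnd : (T.image Prod.snd).card ≤ (D.image Prod.snd).card :=
    Finset.card_le_card (Finset.image_subset_image Finset.inter_subset_left)
  have hDsnd : 2 * (D.image Prod.snd).card ≤ D.card := by
    rw [Finset.card_eq_sum_card_image Prod.snd D, mul_comm, ← smul_eq_mul, ← Finset.sum_const]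
    exact Finset.sum_le_sum hcol
  have hDsnd0 := (hD.image Prod.snd).card_pos
  omega

end Cycles

section CycleSpace

variable {m n : ℕ} {F : Type*} [Field F]

variable (F) in
def cycleSpace (E : Finset (Fin m × Fin n)) : Submodule F (Fin m × Fin n → F) where
  carrier := {y | (∀ i, ∑ j, y (i, j) = 0) ∧ (∀ j, ∑ i, y (i, j) = 0) ∧ ∀ e ∉ E, y e = 0}
  add_mem' := by
    rintro y z ⟨hy₁, hy₂, hy₃⟩ ⟨hz₁, hz₂, hz₃⟩
    simp_all [Finset.sum_add_distrib]
  zero_mem' := by simp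
  smul_mem' := by
    rintro c y ⟨hy₁, hy₂, hy₃⟩
    simp_all [← Finset.mul_sum]

theorem exists_ne_ne_zero_of_sum_eq_zero {ι M : Type*} [Fintype ι] [AddCommMonoid M]
    {f : ι → M} (h : ∑ i, f i = 0) {a : ι} (ha : f a ≠ 0) : ∃ b ≠ a, f b ≠ 0 := by
  by_contra! h'
  exact ha (by rwa [Fintype.sum_eq_single a h'] at h)

theorem exists_isSimpleCycle_of_mem_cycleSpace {E : Finset (Fin m × Fin n)}
    {y : Fin m × Fin n → F} (hy : y ∈ cycleSpace F E) (hy0 : y ≠ 0) :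
    ∃ C, IsSimpleCycle C ∧ ∀ e ∈ C, y e ≠ 0 := by
  classical
  obtain ⟨hrow, hcol, -⟩ := hy
  obtain ⟨e₀, he₀⟩ := Function.ne_iff.1 hy0
  obtain ⟨C, hC, hCy⟩ := exists_isSimpleCycle_subset (S := Finset.univ.filter (y · ≠ 0))
    ⟨e₀, by simpa using he₀⟩
    (fun e he => by
      obtain ⟨i, hi, hyi⟩ := exists_ne_ne_zero_of_sum_eq_zero (hcol e.2) (a := e.1)
        (by simpa using he)
      exact ⟨(i, e.2), by simpa using hyi, rfl, hi⟩)
    (fun e he => by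
      obtain ⟨j, hj, hyj⟩ := exists_ne_ne_zero_of_sum_eq_zero (hrow e.1) (a := e.2)
        (by simpa using he)
      exact ⟨(e.1, j), by simpa using hyj, rfl, hj⟩)
  exact ⟨C, hCy, fun e he => by simpa using hC he⟩

theorem IsAcyclicEdges.eq_zero_of_mem_cycleSpace {E : Finset (Fin m × Fin n)}
    (hE : IsAcyclicEdges E) {y : Fin m × Fin n → F} (hy : y ∈ cycleSpace F E) : y = 0 := by
  by_contra hy0
  obtain ⟨C, hC, hCy⟩ := exists_isSimpleCycle_of_mem_cycleSpace hy hy0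
  refine hE C (fun e he => ?_) hC
  by_contra heE
  exact hCy e he (hy.2.2 e heE)

theorem finrank_cycleSpace_union_le {E' F' : Finset (Fin m × Fin n)} (hE' : IsAcyclicEdges E') :
    Module.finrank F (cycleSpace F (E' ∪ F')) ≤ F'.card := by
  classical
  let restrict := (LinearMap.funLeft F F ((↑) : F' → Fin m × Fin n)).comp
    (cycleSpace F (E' ∪ F')).subtype
  have hinj : Function.Injective restrict := by
    rw [← LinearMap.ker_eq_bot, LinearMap.ker_eq_bot']
    rintro ⟨y, hrow, hcol, hsupp⟩ hy
    have hyF' : ∀ e ∈ F', y e = 0 := fun e he => congrFun hy ⟨e, he⟩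
    refine Subtype.ext (hE'.eq_zero_of_mem_cycleSpace ⟨hrow, hcol, fun e he => ?_⟩)
    by_cases heF' : e ∈ F'
    · exact hyF' e heF'
    · exact hsupp e (by simp [he, heF'])
  simpa using LinearMap.finrank_le_finrank_of_injective hinj

theorem Finset.sum_range_succ_mod {M : Type*} [AddCommMonoid M] (f : ℕ → M) (k : ℕ) :
    ∑ ℓ ∈ Finset.range k, f ((ℓ + 1) % k) = ∑ ℓ ∈ Finset.range k, f ℓ := by
  rcases k with _ | k
  · simp
  rw [Finset.sum_range_succ, Nat.mod_self, Finset.sum_range_succ']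
  congr 1
  exact Finset.sum_congr rfl fun ℓ hℓ => by
    rw [Nat.mod_eq_of_lt (by simpa using hℓ)]

theorem sum_cycle_eq {M : Type*} [AddCommMonoid M] {k : ℕ} (hk : 2 ≤ k)
    {I : ℕ → Fin m} {J : ℕ → Fin n} (hI : Set.InjOn I (Set.Iio k)) (hJ : Set.InjOn J (Set.Iio k))
    (g : Fin m × Fin n → M) :
    ∑ e ∈ ((Finset.range k).image fun ℓ => (I ℓ, J ℓ)) ∪
        ((Finset.range k).image fun ℓ => (I ((ℓ + 1) % k), J ℓ)), g e =
      ∑ ℓ ∈ Finset.range k, (g (I ℓ, J ℓ) + g (I ((ℓ + 1) % k), J ℓ)) := by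
  classical
  have hJ' : Set.InjOn J (Finset.range k) := by simpa [Set.Iio] using hJ
  have hsucc : ∀ ℓ < k, (ℓ + 1) % k ≠ ℓ := fun ℓ hℓ => by
    rcases Nat.lt_or_ge (ℓ + 1) k with h | h
    · rw [Nat.mod_eq_of_lt h]; omega
    · rw [show ℓ + 1 = k by omega, Nat.mod_self]; omega
  rw [Finset.sum_union, Finset.sum_image, Finset.sum_image, Finset.sum_add_distrib]
  · exact fun a ha b hb h => hJ' ha hb (congrArg Prod.snd h)
  · exact fun a ha b hb h => hJ' ha hb (congrArg Prod.snd h)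
  · simp only [Finset.disjoint_left, Finset.mem_image, Finset.mem_range]
    rintro _ ⟨a, ha, rfl⟩ ⟨b, hb, h⟩
    rw [hJ hb ha (congrArg Prod.snd h)] at h
    exact hsucc a ha (hI (Nat.mod_lt _ (by omega)) ha (congrArg Prod.fst h))

theorem sum_row_eq_sum_ite {M : Type*} [AddCommMonoid M] (y : Fin m × Fin n → M) (i : Fin m) :
    ∑ j, y (i, j) = ∑ e, if e.1 = i then y e else 0 := by
  rw [Fintype.sum_prod_type_right]
  simp

theorem sum_col_eq_sum_ite {M : Type*} [AddCommMonoid M] (y : Fin m × Fin n → M) (j : Fin n) :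
    ∑ i, y (i, j) = ∑ e, if e.2 = j then y e else 0 := by
  rw [Fintype.sum_prod_type]
  simp

theorem IsSimpleCycle.indicator_mem_cycleSpace [CharP F 2] {C E : Finset (Fin m × Fin n)}
    (hC : IsSimpleCycle C) (hCE : C ⊆ E) :
    (C : Set (Fin m × Fin n)).indicator (1 : Fin m × Fin n → F) ∈ cycleSpace F E := by
  classical
  have hsum : ∀ p : Fin m × Fin n → Prop, [DecidablePred p] →
      ∑ e, (if p e then (C : Set (Fin m × Fin n)).indicator (1 : Fin m × Fin n → F) e else 0) =
        ∑ e ∈ C, if p e then 1 else 0 := fun p _ => by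
    simp [Set.indicator_apply, ← Finset.sum_filter, Finset.filter_inter]
  obtain ⟨k, hk, I, J, hI, hJ, rfl⟩ := hC
  refine ⟨fun i => ?_, fun j => ?_, fun e he => ?_⟩
  · rw [sum_row_eq_sum_ite, hsum, sum_cycle_eq hk hI hJ, Finset.sum_add_distrib,
      Finset.sum_range_succ_mod (fun ℓ => if I ℓ = i then (1 : F) else 0), CharTwo.add_self_eq_zero]
  · rw [sum_col_eq_sum_ite, hsum, sum_cycle_eq hk hI hJ, Finset.sum_add_distrib,
      CharTwo.add_self_eq_zero]
  · exact Set.indicator_of_notMem (fun h => he (hCE h)) _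

variable (F) in
def cycleIndicators (E : Finset (Fin m × Fin n)) : Set (Fin m × Fin n → F) :=
  {v | ∃ C ⊆ E, IsSimpleCycle C ∧ v = (C : Set (Fin m × Fin n)).indicator 1}

/-- Subtracting a multiple of the indicator of a cycle in the support shrinks the support. -/
theorem span_cycleIndicators [CharP F 2] (E : Finset (Fin m × Fin n)) :
    Submodule.span F (cycleIndicators F E) = cycleSpace F E := by
  classical
  refine le_antisymm (Submodule.span_le.2 ?_) fun y hy => ?_
  · rintro _ ⟨C, hCE, hC, rfl⟩
    exact hC.indicator_mem_cycleSpace hCE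
  induction hN : (Finset.univ.filter (y · ≠ 0)).card using Nat.strong_induction_on
    generalizing y with
  | _ N ih =>
  by_cases hy0 : y = 0
  · simp [hy0]
  obtain ⟨C, hC, hCy⟩ := exists_isSimpleCycle_of_mem_cycleSpace hy hy0
  obtain ⟨e₀, he₀⟩ := hC.nonempty
  have hCE : C ⊆ E := fun e he => by_contra fun heE => hCy e he (hy.2.2 e heE)
  set χ := (C : Set (Fin m × Fin n)).indicator (1 : Fin m × Fin n → F)
  set y' := y - y e₀ • χ
  have hsupp : Finset.univ.filter (y' · ≠ 0) ⊆ (Finset.univ.filter (y · ≠ 0)).erase e₀ := by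
    intro e
    by_cases he : e ∈ C <;> simp only [y', χ, he, Finset.mem_filter, Finset.mem_erase,
      Finset.mem_univ, Pi.sub_apply, Pi.smul_apply, Set.indicator, Finset.mem_coe, if_true,
      if_false, smul_eq_mul, mul_zero, sub_zero, true_and]
    · exact fun h => ⟨by rintro rfl; simp at h, hCy e he⟩
    · exact fun h => ⟨by rintro rfl; exact he he₀, h⟩
  have hlt : (Finset.univ.filter (y' · ≠ 0)).card < N := hN ▸
    (Finset.card_le_card hsupp).trans_lt (Finset.card_erase_lt_of_mem (by simpa using hCy e₀ he₀))
  have hy' := ih _ hlt y'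
    (sub_mem hy (Submodule.smul_mem _ _ (hC.indicator_mem_cycleSpace hCE))) rfl
  rw [← sub_add_cancel y (y e₀ • χ)]
  exact add_mem hy' (Submodule.smul_mem _ _ (Submodule.subset_span ⟨C, hCE, hC, rfl⟩))

theorem eq_zero_or_eq_one_of_mem_cycleIndicators {E : Finset (Fin m × Fin n)}
    {v : Fin m × Fin n → F} (hv : v ∈ cycleIndicators F E) (e : Fin m × Fin n) :
    v e = 0 ∨ v e = 1 := by
  obtain ⟨C, -, -, rfl⟩ := hv
  by_cases he : e ∈ C <;> simp [he]

end CycleSpace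

section Moore

variable {K : Type*} [Field K] [CharP K 2]

theorem injective_subsetSum_of_sum_ne_zero {ι : Type*} [DecidableEq ι] {β : ι → K}
    (hβ : ∀ s : Finset ι, s.Nonempty → ∑ i ∈ s, β i ≠ 0) :
    Function.Injective fun s : Finset ι => ∑ i ∈ s, β i := by
  intro s t hst
  by_contra hne
  have hsub : ∑ i ∈ s \ t, β i - ∑ i ∈ t \ s, β i = 0 := by
    rw [Finset.sum_sdiff_sub_sum_sdiff, sub_eq_zero]
    exact hst
  refine hβ (s \ t ∪ t \ s) ?_ ?_
  · rw [← Finset.symmDiff_def, Finset.symmDiff_nonempty]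
    exact hne
  · rwa [Finset.sum_union disjoint_sdiff_sdiff, ← CharTwo.sub_eq_add]

open Polynomial in
/-- The Moore matrix `(β_v ^ 2 ^ l)_{l, v}` of an `𝔽₂`-independent family has independent rows:
a nonzero `2`-linearised polynomial `∑ g_l X ^ 2 ^ l` of degree `< 2 ^ r` cannot vanish at all
`2 ^ r` subset sums of `β`. -/
theorem eq_zero_of_sum_mul_pow_two_pow_eq_zero {ι : Type*} [Fintype ι] {β : ι → K}
    (hβ : ∀ s : Finset ι, s.Nonempty → ∑ i ∈ s, β i ≠ 0) {α : ι → K}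
    (hα : ∀ l < Fintype.card ι, ∑ i, α i * β i ^ 2 ^ l = 0) : α = 0 := by
  classical
  set e := Fintype.equivFin ι
  let M : Matrix ι ι K := Matrix.of fun u v => β v ^ 2 ^ (e u : ℕ)
  have hrows : LinearIndependent K M.row := by
    rw [Fintype.linearIndependent_iff]
    intro g hg
    have hgv : ∀ v, ∑ u, g u * β v ^ 2 ^ (e u : ℕ) = 0 := fun v => by
      simpa [M, Finset.sum_apply] using congrFun hg v
    let P : K[X] := ∑ u, C (g u) * X ^ 2 ^ (e u : ℕ)
    have hP : P = 0 := by
      refine eq_zero_of_natDegree_lt_card_of_eval_eq_zero P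
        (injective_subsetSum_of_sum_ne_zero hβ) (fun s => ?_) ?_
      · simp only [P, eval_finsetSum, eval_mul, eval_C, eval_pow, eval_X, sum_pow_char_pow,
          Finset.mul_sum]
        rw [Finset.sum_comm]
        exact Finset.sum_eq_zero fun v _ => hgv v
      · have hdeg : ∀ u ∈ Finset.univ,
            (C (g u) * X ^ 2 ^ (e u : ℕ)).natDegree ≤ 2 ^ Fintype.card ι - 1 := fun u _ =>
          (natDegree_C_mul_X_pow_le _ _).trans
            (Nat.le_sub_one_of_lt (Nat.pow_lt_pow_right one_lt_two (e u).isLt))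
        rw [Fintype.card_finset]
        exact (natDegree_sum_le_of_forall_le _ _ hdeg).trans_lt
          (Nat.sub_lt (Nat.two_pow_pos _) one_pos)
    intro u
    simpa [P, coeff_C_mul_X_pow, Nat.pow_right_inj one_lt_two, Fin.val_inj] using
      congrArg (coeff · (2 ^ (e u : ℕ))) hP
  refine Matrix.mulVec_injective_iff_isUnit.2 (Matrix.linearIndependent_rows_iff_isUnit.1 hrows) ?_
  rw [Matrix.mulVec_zero]
  funext u
  simpa [M, Matrix.mulVec, dotProduct, mul_comm] using hα (e u) (e u).isLt

end Moore

section BCH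

theorem Finset.eq_empty_of_sum_pow_eq_zero {K : Type*} [Field K] {S : Finset K}
    (h : ∀ j < S.card, ∑ x ∈ S, x ^ j = 0) : S = ∅ := by
  by_contra hS
  have hones : (fun _ => 1 : Fin S.card → K) = 0 := by
    refine Matrix.eq_zero_of_forall_pow_sum_mul_pow_eq_zero
      (f := fun a => (S.equivFin.symm a : K)) (fun a b hab => S.equivFin.symm.injective
        (Subtype.ext hab)) fun j => ?_
    calc ∑ a, 1 * (S.equivFin.symm a : K) ^ (j : ℕ) = ∑ x : S, (x : K) ^ (j : ℕ) := by
          simpa using S.equivFin.symm.sum_comp (fun x : S => (x : K) ^ (j : ℕ))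
      _ = 0 := (S.sum_coe_sort _).trans (h j j.isLt)
  exact one_ne_zero (congrFun hones ⟨0, Finset.card_pos.2 (Finset.nonempty_iff_ne_empty.2 hS)⟩)

theorem sum_pow_eq_zero_of_sum_pow_odd_eq_zero {K : Type*} [Field K] [CharP K 2] {S : Finset K}
    (heven : Even S.card) {r : ℕ} (hodd : ∀ s < r, ∑ x ∈ S, x ^ (2 * s + 1) = 0) :
    ∀ j < 2 * r, ∑ x ∈ S, x ^ j = 0 := by
  intro j
  induction j using Nat.strong_induction_on with
  | _ j ih =>
  intro hj
  obtain ⟨i, rfl | rfl⟩ := Nat.even_or_odd' j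
  · rcases i.eq_zero_or_pos with rfl | hi
    · simpa using (CharP.cast_eq_zero_iff K 2 _).2 (even_iff_two_dvd.1 heven)
    · have hsq : ∑ x ∈ S, x ^ (2 * i) = (∑ x ∈ S, x ^ i) ^ 2 := by
        simp [sum_pow_char, ← pow_mul, mul_comm]
      rw [hsq, ih i (by omega) (by omega), zero_pow two_ne_zero]
  · exact hodd i (by omega)

theorem exists_forall_sum_ne_zero {F : Type*} [Field F] [Fintype F] [CharP F 2] {ι : Type*}
    [Fintype ι] {d r : ℕ} (hd : d ≠ 0) (hι : Fintype.card ι ≤ 2 ^ d)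
    (hF : Fintype.card F = 2 ^ (1 + d * r)) :
    ∃ γ : ι → F, ∀ D : Finset ι, D.Nonempty → D.card ≤ 2 * r → ∑ e ∈ D, γ e ≠ 0 := by
  classical
  let K := GaloisField 2 d
  let : Fintype K := Fintype.ofFinite K
  let : Algebra (ZMod 2) F := ZMod.algebra F 2
  obtain ⟨φ⟩ : Nonempty (ι ↪ K) := by
    rw [Function.Embedding.nonempty_iff_card_le, ← Nat.card_eq_fintype_card (α := K),
      GaloisField.card 2 d hd]
    exact hι
  have hfinrank : Module.finrank (ZMod 2) (ZMod 2 × (Fin r → K)) = Module.finrank (ZMod 2) F := by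
    have hV := Module.card_eq_pow_finrank (K := ZMod 2) (V := ZMod 2 × (Fin r → K))
    have hF' := Module.card_eq_pow_finrank (K := ZMod 2) (V := F)
    rw [ZMod.card] at hV hF'
    refine Nat.pow_right_injective le_rfl (show 2 ^ _ = 2 ^ _ from ?_)
    rw [← hV, ← hF', hF, Fintype.card_prod, Fintype.card_pi, ZMod.card, Finset.prod_const,
      Finset.card_univ, Fintype.card_fin, ← Nat.card_eq_fintype_card (α := K),
      GaloisField.card 2 d hd, pow_add, pow_one, pow_mul]
  let L := LinearEquiv.ofFinrankEq _ _ hfinrank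
  refine ⟨fun e => L (1, fun s => φ e ^ (2 * (s : ℕ) + 1)), fun D hD hDcard hsum => ?_⟩
  rw [← map_sum, map_eq_zero_iff L L.injective, Prod.ext_iff] at hsum
  simp only [Prod.fst_sum, Prod.snd_sum, Finset.sum_const, nsmul_eq_mul, mul_one, Prod.fst_zero,
    Prod.snd_zero, funext_iff, Finset.sum_apply, Pi.zero_apply] at hsum
  obtain ⟨hcard, hodd⟩ := hsum
  refine hD.ne_empty (Finset.image_eq_empty.1
    (Finset.eq_empty_of_sum_pow_eq_zero (S := D.image φ) ?_))
  rw [Finset.card_image_of_injective D φ.injective]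
  refine fun j hj => sum_pow_eq_zero_of_sum_pow_odd_eq_zero (r := r) ?_ (fun s hs => ?_) j
    (by omega)
  · rw [Finset.card_image_of_injective D φ.injective, even_iff_two_dvd,
      ← ZMod.natCast_eq_zero_iff]
    exact hcard
  · rw [Finset.sum_image fun a _ b _ hab => φ.injective hab]
    exact hodd ⟨s, hs⟩

end BCH

section Kernel

variable {m n h : ℕ} {F : Type*} [Field F] [CharP F 2] {E' F' : Finset (Fin m × Fin n)}
  {γ : Fin m × Fin n → F}

theorem sum_mul_ne_zero_of_mem_cycleSpace (hE' : IsAcyclicEdges E') (hF' : F'.card ≤ h)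
    (hγ : ∀ D : Finset (Fin m × Fin n), D.Nonempty → D.card ≤ 2 * (m + h - 1) →
      ∑ e ∈ D, γ e ≠ 0)
    {w : Fin m × Fin n → F} (hw : w ∈ cycleSpace F (E' ∪ F')) (hw01 : ∀ e, w e = 0 ∨ w e = 1)
    (hw0 : w ≠ 0) :
    ∑ e, w e * γ e ≠ 0 := by
  classical
  set D := Finset.univ.filter (w · = 1)
  have hwD : ∀ e, w e = if e ∈ D then 1 else 0 := fun e => by
    rcases hw01 e with he | he <;> simp [D, he]
  have hsum : ∑ e, w e * γ e = ∑ e ∈ D, γ e := by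
    simp [hwD, ite_mul, Finset.sum_ite_mem]
  have hD : D.Nonempty := by
    obtain ⟨e, he⟩ := Function.ne_iff.1 hw0
    exact ⟨e, by simpa [D, he] using (hw01 e).resolve_left he⟩
  rw [hsum]
  refine hγ D hD (card_le_of_two_le_card_column hD (fun e he => ?_) hE' hF' ?_)
  · by_contra heE
    simp [D, hw.2.2 e heE] at he
  · intro j hj
    have heven : ((D.filter (·.2 = j)).card : F) = 0 := by
      rw [← hw.2.1 j, sum_col_eq_sum_ite]
      simp [hwD, Finset.sum_ite, Finset.filter_inter]
    obtain ⟨e, he, rfl⟩ := Finset.mem_image.1 hj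
    have hpos : 0 < (D.filter (·.2 = e.2)).card := Finset.card_pos.2 ⟨e, by simp [he]⟩
    have := (CharP.cast_eq_zero_iff F 2 _).1 heven
    omega

theorem sum_sum_mul_ne_zero_of_linearIndependent (hE' : IsAcyclicEdges E') (hF' : F'.card ≤ h)
    (hγ : ∀ D : Finset (Fin m × Fin n), D.Nonempty → D.card ≤ 2 * (m + h - 1) →
      ∑ e ∈ D, γ e ≠ 0)
    {b : Set (Fin m × Fin n → F)} (hb : b ⊆ cycleIndicators F (E' ∪ F'))
    (hbind : LinearIndependent F ((↑) : b → Fin m × Fin n → F)) {s : Finset b} (hs : s.Nonempty) :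
    ∑ v ∈ s, ∑ e, (v : Fin m × Fin n → F) e * γ e ≠ 0 := by
  classical
  have hsum : ∑ v ∈ s, ∑ e, (v : Fin m × Fin n → F) e * γ e =
      ∑ e, (∑ v ∈ s, (v : Fin m × Fin n → F)) e * γ e := by
    simp only [Finset.sum_apply, Finset.sum_mul]
    exact Finset.sum_comm
  rw [hsum]
  refine sum_mul_ne_zero_of_mem_cycleSpace hE' hF' hγ (Submodule.sum_mem _ fun v _ =>
    span_cycleIndicators (F := F) (E' ∪ F') ▸ Submodule.subset_span (hb v.2)) (fun e => ?_) ?_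
  · rw [Finset.sum_apply]
    refine Finset.sum_induction _ (fun x => x = 0 ∨ x = 1) ?_ (Or.inl rfl)
      fun v _ => eq_zero_or_eq_one_of_mem_cycleIndicators (hb v.2) e
    rintro _ _ (rfl | rfl) (rfl | rfl) <;> simp [CharTwo.add_self_eq_zero]
  · intro h0
    obtain ⟨v, hv⟩ := hs
    exact one_ne_zero (linearIndependent_iff'.1 hbind s 1 (by simpa using h0) v hv)

theorem eq_zero_of_mem_cycleSpace_of_sum_mul_pow_eq_zero (hE' : IsAcyclicEdges E')
    (hF' : F'.card ≤ h)
    (hγ : ∀ D : Finset (Fin m × Fin n), D.Nonempty → D.card ≤ 2 * (m + h - 1) →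
      ∑ e ∈ D, γ e ≠ 0)
    {y : Fin m × Fin n → F} (hy : y ∈ cycleSpace F (E' ∪ F'))
    (hyγ : ∀ l < h, ∑ e, y e * γ e ^ 2 ^ l = 0) :
    y = 0 := by
  classical
  obtain ⟨b, hb, hbspan, hbind⟩ := exists_linearIndependent F (cycleIndicators F (E' ∪ F'))
  rw [span_cycleIndicators] at hbspan
  have : Fintype b := hbind.setFinite.fintype
  have hcard : Fintype.card b ≤ h := by
    rw [← Set.toFinset_card, ← finrank_span_set_eq_card hbind, hbspan]
    exact (finrank_cycleSpace_union_le hE').trans hF'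
  obtain ⟨α, rfl⟩ := (Submodule.mem_span_range_iff_exists_fun F).1
    (show y ∈ Submodule.span F (Set.range ((↑) : b → Fin m × Fin n → F)) by
      rwa [Subtype.range_coe, hbspan])
  set β : b → F := fun v => ∑ e, (v : Fin m × Fin n → F) e * γ e
  have hβpow : ∀ v : b, ∀ l, β v ^ 2 ^ l = ∑ e, (v : Fin m × Fin n → F) e * γ e ^ 2 ^ l := by
    intro v l
    rw [sum_pow_char_pow]
    refine Finset.sum_congr rfl fun e _ => ?_
    rcases eq_zero_or_eq_one_of_mem_cycleIndicators (hb v.2) e with he | he <;> simp [he]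
  have hα : α = 0 := by
    refine eq_zero_of_sum_mul_pow_two_pow_eq_zero (β := β)
      (fun s hs => sum_sum_mul_ne_zero_of_linearIndependent hE' hF' hγ hb hbind hs) fun l hl => ?_
    rw [← hyγ l (hl.trans_le hcard)]
    simp only [hβpow, Finset.mul_sum, Finset.sum_apply, Pi.smul_apply, smul_eq_mul, Finset.sum_mul,
      mul_assoc]
    exact Finset.sum_comm
  simp [hα]

end Kernel

section GridCode

open Matrix

variable {F : Type*} [Field F] {m n h : ℕ} {c : Fin m × Fin n → Fin h → F}

theorem sums_eq_zero_of_gridH_mulVec_eq_zero {y : Fin m × Fin n → F}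
    (hy : gridH F m n h c *ᵥ y = 0) :
    (∀ i, ∑ j, y (i, j) = 0) ∧ (∀ j, ∑ i, y (i, j) = 0) ∧ ∀ l, ∑ e, c e l * y e = 0 := by
  have hrow : ∀ i, ∑ j, y (i, j) = 0 := fun i => by
    simpa [sum_row_eq_sum_ite, gridH, Matrix.mulVec, dotProduct, ite_mul] using congrFun hy (.inl i)
  have hcol : ∀ j : Fin n, (j : ℕ) < n - 1 → ∑ i, y (i, j) = 0 := fun j hj => by
    simpa [sum_col_eq_sum_ite, gridH, Matrix.mulVec, dotProduct, ite_mul, Fin.val_inj] using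
      congrFun hy (.inr (.inl ⟨j, hj⟩))
  refine ⟨hrow, fun j => ?_, fun l => by
    simpa [gridH, Matrix.mulVec, dotProduct] using congrFun hy (.inr (.inr l))⟩
  by_cases hj : (j : ℕ) < n - 1
  · exact hcol j hj
  -- the check of the last column is implied by the row checks
  have htotal : ∑ j, ∑ i, y (i, j) = 0 := by
    rw [Finset.sum_comm]
    exact Finset.sum_eq_zero fun i _ => hrow i
  rwa [Fintype.sum_eq_single j fun j' hj' => hcol j' (by
    have := Fin.val_ne_of_ne hj'
    omega)] at htotal

/-- Extended by zero, a kernel vector of `H|_E` is a vector of the cycle space of `E` satisfying the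
global checks. -/
theorem isMR_of_forall_mem_cycleSpace
    (hc : ∀ E' F' : Finset (Fin m × Fin n), IsAcyclicEdges E' → F'.card ≤ h →
      ∀ y ∈ cycleSpace F (E' ∪ F'), (∀ l, ∑ e, c e l * y e = 0) → y = 0) :
    IsMR F m n h c := by
  classical
  rintro E ⟨E', F', hE', hF', rfl⟩
  set A := (gridH F m n h c).submatrix id fun e : ↥(E' ∪ F') => (e : Fin m × Fin n)
  have hinj : Function.Injective A.mulVecLin := by
    rw [← LinearMap.ker_eq_bot, LinearMap.ker_eq_bot']
    intro x hx
    set y : Fin m × Fin n → F := fun e => if he : e ∈ E' ∪ F' then x ⟨e, he⟩ else 0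
    have hAy : gridH F m n h c *ᵥ y = A *ᵥ x := by
      funext r
      simp only [Matrix.mulVec, dotProduct, A, Matrix.submatrix_apply, id]
      rw [← Finset.sum_subset (Finset.subset_univ (E' ∪ F')) fun e _ he => by
          simp only [y, dif_neg he, mul_zero], ← Finset.sum_coe_sort (E' ∪ F')]
      exact Finset.sum_congr rfl fun e _ => by simp only [y, dif_pos e.2]
    obtain ⟨hrow, hcol, hglobal⟩ := sums_eq_zero_of_gridH_mulVec_eq_zero (hAy.trans hx)
    have hy := hc E' F' hE' hF' y ⟨hrow, hcol, fun e he => dif_neg he⟩ hglobal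
    funext e
    simpa only [y, dif_pos e.2, Subtype.coe_eta, Pi.zero_apply] using congrFun hy e
  rw [Matrix.rank, LinearMap.finrank_range_of_inj hinj, Module.finrank_fintype_fun_eq_card,
    Fintype.card_coe]

end GridCode

theorem statement6_general (m n h k : ℕ) (hm : 2 ≤ m)
    (hn : ∃ t : ℕ, n = 2 ^ t)
    (hk : m < 2 ^ k)
    (F : Type*) [Field F] [Fintype F]
    (hcard : Fintype.card F = 2 * (2 ^ k * n) ^ (m + h - 1)) :
    ∃ γ : Fin m × Fin n → F, IsMR F m n h (fun ij l => γ ij ^ 2 ^ (l : ℕ)) := by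
  obtain ⟨t, rfl⟩ := hn
  have hF : Fintype.card F = 2 ^ (1 + (k + t) * (m + h - 1)) := by
    rw [hcard, pow_add 2 1, pow_one, pow_mul, pow_add]
  have : CharP F 2 := charP_of_card_eq_prime_pow hF
  have hk0 : k ≠ 0 := by
    rintro rfl
    omega
  obtain ⟨γ, hγ⟩ := exists_forall_sum_ne_zero (ι := Fin m × Fin (2 ^ t)) (by omega)
    (by simpa [pow_add] using Nat.mul_le_mul_right (2 ^ t) hk.le) hF
  refine ⟨γ, isMR_of_forall_mem_cycleSpace fun E' F' hE' hF' y hy hyc =>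
    eq_zero_of_mem_cycleSpace_of_sum_mul_pow_eq_zero hE' hF' hγ hy fun l hl => ?_⟩
  simpa [mul_comm] using hyc ⟨l, hl⟩

/-- Theorem 3.8, BCH construction.  Let `m ≥ 2`, `h ≥ 1`, `n ≥ 2` a
power of two, and let `2 ^ k` be the least power of two strictly greater than `m`.  Over
any field with `q = 2 * (2 ^ k * n) ^ (m + h - 1)` elements there is an MR
`(m, n, a=1, b=1, h)` grid code which is a Gabidulin construction (with `p = 2`), i.e.
with global parity checks `c^{i,j} = (γ(i,j), γ(i,j)^2, …, γ(i,j)^{2^{h-1}})`. -/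
theorem statement6 (m n h k : ℕ) (hm : 2 ≤ m) (hn2 : 2 ≤ n) (hh : 1 ≤ h)
    (hn : ∃ t : ℕ, n = 2 ^ t)
    (hk : m < 2 ^ k) (hkleast : ∀ k' : ℕ, m < 2 ^ k' → k ≤ k')
    (F : Type*) [Field F] [Fintype F]
    (hcard : Fintype.card F = 2 * (2 ^ k * n) ^ (m + h - 1)) :
    ∃ γ : Fin m × Fin n → F, IsMR F m n h (fun ij l => γ ij ^ 2 ^ (l : ℕ)) :=
  statement6_general m n h k hm hn hk F hcard
end
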